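/- arXiv:2003.03966 — 12 statements merged into one kernel-verified Lean document; each statement's English description precedes it below -/
import Mathlib

section
/- Let I ⊆ S be a monomial ideal and c = (c_1,…,c_n) a vector of non-negative integers. If {u_1,…,u_m} and {v_1,…,v_r} are two (not necessarily minimal) sets of monomials each of which generates I, then the ideal generated by those u_i that are c-bounded equals the ideal generated by those v_j that are c-bounded. In particular, the ideal I^{≤c} generated by the c-bounded monomials among any monomial generating set of I is well defined, independent of the chosen generating set. -/
open MvPolynomial

namespace MvPolynomial

variable {σ R : Type*} [CommSemiring R]

theorem monomial_one_mem_ideal_span_monomial_image [Nontrivial R] {a : σ →₀ ℕ}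
    {s : Set (σ →₀ ℕ)} :
    monomial a (1 : R) ∈ Ideal.span ((fun b => monomial b (1 : R)) '' s) ↔ ∃ b ∈ s, b ≤ a := by
  classical
  rw [mem_ideal_span_monomial_image, support_monomial, if_neg one_ne_zero]
  simp only [Finset.mem_singleton, forall_eq]

/-- A generator in `P` is a multiple of some generator from `t`, whose exponent then also
lies in `P`. -/
theorem span_monomial_image_inter_le_of_isLowerSet {P s t : Set (σ →₀ ℕ)} (hP : IsLowerSet P)
    (h : Ideal.span ((fun a => monomial a (1 : R)) '' s) ≤
      Ideal.span ((fun a => monomial a (1 : R)) '' t)) :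
    Ideal.span ((fun a => monomial a (1 : R)) '' (s ∩ P)) ≤
      Ideal.span ((fun a => monomial a (1 : R)) '' (t ∩ P)) := by
  nontriviality R
  rw [Ideal.span_le]
  rintro _ ⟨a, ⟨has, haP⟩, rfl⟩
  obtain ⟨b, hbt, hba⟩ :=
    monomial_one_mem_ideal_span_monomial_image.mp (h (Ideal.subset_span ⟨a, has, rfl⟩))
  exact monomial_one_mem_ideal_span_monomial_image.mpr ⟨b, ⟨hbt, hP hba haP⟩, hba⟩

end MvPolynomial

/-- If two (not necessarily minimal) sets of monomials `u` and `v` generate the same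
monomial ideal `I`, then the ideal generated by the `c`-bounded monomials among the `u_i` equals
the ideal generated by the `c`-bounded monomials among the `v_j`; hence `I^{≤c}` is well defined. -/
theorem stmt_0 {K : Type*} [Field K] {n m r : ℕ} (c : Fin n → ℕ)
    (u : Fin m → (Fin n →₀ ℕ)) (v : Fin r → (Fin n →₀ ℕ))
    (h : Ideal.span ((fun a : Fin n →₀ ℕ => (monomial a (1 : K))) '' Set.range u) =
         Ideal.span ((fun a : Fin n →₀ ℕ => (monomial a (1 : K))) '' Set.range v)) :
    Ideal.span ((fun a : Fin n →₀ ℕ => (monomial a (1 : K))) ''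
        {a | (∃ i, u i = a) ∧ ∀ k, a k ≤ c k}) =
    Ideal.span ((fun a : Fin n →₀ ℕ => (monomial a (1 : K))) ''
        {a | (∃ j, v j = a) ∧ ∀ k, a k ≤ c k}) := by
  have hc : IsLowerSet {a : Fin n →₀ ℕ | ∀ k, a k ≤ c k} :=
    fun _ _ hba ha k => (hba k).trans (ha k)
  exact le_antisymm (span_monomial_image_inter_le_of_isLowerSet hc h.le)
    (span_monomial_image_inter_le_of_isLowerSet hc h.ge)
end

section
/- Let c = (c_1,…,c_n) be a vector of non-negative integers and let u ∈ S be a c-bounded monomial. Then B^c(u) = B(u)^{≤c}; that is, a c-bounded monomial v belongs to B^c(u) (is reachable from u by a chain of Borel moves all of whose intermediate monomials are c-bounded) if and only if v belongs to B(u) (is reachable from u by an arbitrary chain of Borel moves). -/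
/-!
A Borel move shifts one unit of exponent to a smaller index, so if `x^v` is reached from `x^u`
by Borel moves then `v` dominates `u`: both have the same degree and every prefix sum of `v` is
at least the corresponding one of `u`. Conversely, let `u ≠ v` be `c`-bounded with `v` dominating
`u`, let `i` be the first index where they differ and `j` the first index with `u j > v j`.
Then `i < j`, and moving one unit from `j` to `i` gives a monomial that is still `c`-bounded
(its `i`-th entry is at most `v i`) and still dominated by `v`, while the sum of all its prefix
sums has grown. Induction on the gap in this potential produces a `c`-bounded chain from `u` to `v`.
-/

/-- A single Borel move: `b = x_i · (a / x_j)` for some `i < j` with `x_j ∣ x^a`. -/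
def BorelMove {n : ℕ} (a b : Fin n →₀ ℕ) : Prop :=
  ∃ i j : Fin n, i < j ∧ a j ≠ 0 ∧ b = a - Finsupp.single j 1 + Finsupp.single i 1

open Finset Finsupp Relation

theorem Finsupp.sum_sub_single_add_single {α : Type*} [DecidableEq α] {a : α →₀ ℕ} {j : α}
    (hj : a j ≠ 0) (i : α) (s : Finset α) :
    ∑ m ∈ s, (a - single j 1 + single i 1 : α →₀ ℕ) m + (if j ∈ s then 1 else 0) =
      ∑ m ∈ s, a m + if i ∈ s then 1 else 0 := by
  have h : a - single j 1 + single i 1 + single j 1 = a + single i 1 := by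
    ext m
    simp only [coe_add, coe_tsub, Pi.add_apply, Pi.sub_apply, single_apply]
    split_ifs <;> subst_vars <;> omega
  simpa [sum_add_distrib, single_apply] using congrArg (fun f : α →₀ ℕ => ∑ m ∈ s, f m) h

section PrefixSums

variable {n : ℕ}

def prefixSum (a : Fin n →₀ ℕ) (k : Fin n) : ℕ := ∑ m ∈ Iic k, a m

def potential (a : Fin n →₀ ℕ) : ℕ := ∑ k, prefixSum a k

def PrefixDominated (a b : Fin n →₀ ℕ) : Prop :=
  (∀ k, prefixSum a k ≤ prefixSum b k) ∧ ∑ m, a m = ∑ m, b m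

theorem prefixSum_sub_single_add_single {a : Fin n →₀ ℕ} {j : Fin n} (hj : a j ≠ 0)
    (i k : Fin n) :
    prefixSum (a - single j 1 + single i 1) k + (if j ≤ k then 1 else 0) =
      prefixSum a k + if i ≤ k then 1 else 0 := by
  simpa [prefixSum] using sum_sub_single_add_single hj i (Iic k)

theorem sum_univ_sub_single_add_single {a : Fin n →₀ ℕ} {j : Fin n} (hj : a j ≠ 0)
    (i : Fin n) : ∑ m, (a - single j 1 + single i 1 : Fin n →₀ ℕ) m = ∑ m, a m := by
  simpa using sum_sub_single_add_single hj i univ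

variable {a b w : Fin n →₀ ℕ}

theorem PrefixDominated.trans (hab : PrefixDominated a b) (hbw : PrefixDominated b w) :
    PrefixDominated a w :=
  ⟨fun k => (hab.1 k).trans (hbw.1 k), hab.2.trans hbw.2⟩

theorem PrefixDominated.potential_le (h : PrefixDominated a b) : potential a ≤ potential b :=
  sum_le_sum fun k _ => h.1 k

theorem PrefixDominated.apply_le_of_forall_lt_eq (h : PrefixDominated a b) {i : Fin n}
    (heq : ∀ m < i, a m = b m) : a i ≤ b i := by
  have hi := h.1 i
  rwa [prefixSum, prefixSum, Iic_eq_cons_Iio, Finset.sum_cons, Finset.sum_cons,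
    sum_congr rfl fun m hm => heq m (mem_Iio.1 hm), add_le_add_iff_right] at hi

theorem PrefixDominated.eq_of_forall_apply_le (h : PrefixDominated a b)
    (hle : ∀ m, a m ≤ b m) : a = b := by
  ext m
  refine (hle m).antisymm (not_lt.1 fun hlt => ?_)
  exact h.2.not_lt (sum_lt_sum (fun m _ => hle m) ⟨m, mem_univ m, hlt⟩)

theorem BorelMove.prefixDominated (h : BorelMove a b) : PrefixDominated a b := by
  obtain ⟨i, j, hij, hj, rfl⟩ := h
  refine ⟨fun k => ?_, (sum_univ_sub_single_add_single hj i).symm⟩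
  have := prefixSum_sub_single_add_single hj i k
  split_ifs at this with hjk hik hik
  · omega
  · exact absurd (hij.le.trans hjk) hik
  · omega
  · omega

theorem BorelMove.potential_lt (h : BorelMove a b) : potential a < potential b := by
  have hdom := h.prefixDominated
  obtain ⟨i, j, hij, hj, rfl⟩ := h
  have hi := prefixSum_sub_single_add_single hj i i
  rw [if_neg (not_le.2 hij), if_pos le_rfl] at hi
  exact sum_lt_sum (fun k _ => hdom.1 k) ⟨i, mem_univ i, by omega⟩

theorem prefixDominated_of_reflTransGen (h : ReflTransGen BorelMove a b) :
    PrefixDominated a b := by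
  induction h with
  | refl => exact ⟨fun _ => le_rfl, rfl⟩
  | tail _ hmove ih => exact ih.trans hmove.prefixDominated

theorem PrefixDominated.sub_single_add_single {u v : Fin n →₀ ℕ} (huv : PrefixDominated u v)
    {i j : Fin n} (hij : i < j) (huj : u j ≠ 0) (hui : u i < v i)
    (hle : ∀ m < j, u m ≤ v m) : PrefixDominated (u - single j 1 + single i 1) v := by
  refine ⟨fun k => ?_, (sum_univ_sub_single_add_single huj i).trans huv.2⟩
  have hk := prefixSum_sub_single_add_single huj i k
  have hdom := huv.1 k
  by_cases hjk : j ≤ k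
  · rw [if_pos hjk, if_pos (hij.le.trans hjk)] at hk
    omega
  by_cases hik : i ≤ k
  · have hlt : prefixSum u k < prefixSum v k :=
      sum_lt_sum (fun m hm => hle m ((mem_Iic.1 hm).trans_lt (not_le.1 hjk)))
        ⟨i, mem_Iic.2 hik, hui⟩
    rw [if_neg hjk, if_pos hik] at hk
    omega
  · rw [if_neg hjk, if_neg hik] at hk
    omega

theorem PrefixDominated.exists_bounded_borelMove {c : Fin n → ℕ} {u v : Fin n →₀ ℕ}
    (hu : ∀ m, u m ≤ c m) (hv : ∀ m, v m ≤ c m) (huv : PrefixDominated u v) (hne : u ≠ v) :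
    ∃ w, BorelMove u w ∧ (∀ m, w m ≤ c m) ∧ PrefixDominated w v := by
  obtain ⟨i, hi, hi_min⟩ := wellFounded_lt.has_min {m | u m ≠ v m} (Finsupp.ne_iff.1 hne)
  obtain ⟨j, hj, hj_min⟩ := wellFounded_lt.has_min {m | v m < u m} <| by
    by_contra! h
    exact hne (huv.eq_of_forall_apply_le fun m => not_lt.1 fun hm => h.subset hm)
  have heq : ∀ m < i, u m = v m := fun m hm => by_contra fun h => hi_min m h hm
  have hle : ∀ m < j, u m ≤ v m := fun m hm => not_lt.1 fun h => hj_min m h hm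
  have hvj : v j < u j := hj
  have hui : u i < v i := lt_of_le_of_ne (huv.apply_le_of_forall_lt_eq heq) hi
  have hij : i < j := lt_of_le_of_ne (not_lt.1 fun hji => (hvj.trans_eq (heq j hji)).false)
    (by rintro rfl; exact lt_asymm hui hvj)
  have huj : u j ≠ 0 := by omega
  refine ⟨u - single j 1 + single i 1, ⟨i, j, hij, huj, rfl⟩, fun m => ?_,
    huv.sub_single_add_single hij huj hui hle⟩
  have hw : u - single j 1 + single i 1 ≤ u + single i 1 := by
    gcongr
    exact tsub_le_self
  refine (Finsupp.le_def.1 hw m).trans ?_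
  rcases eq_or_ne m i with rfl | hmi
  · simpa [Nat.add_one_le_iff] using hui.trans_le (hv m)
  · simpa [single_eq_of_ne hmi] using hu m

theorem reflTransGen_bounded_of_prefixDominated {c : Fin n → ℕ} {u v : Fin n →₀ ℕ}
    (hu : ∀ m, u m ≤ c m) (hv : ∀ m, v m ≤ c m) (huv : PrefixDominated u v) :
    ReflTransGen (fun a b => BorelMove a b ∧ ∀ m, b m ≤ c m) u v := by
  induction hd : potential v - potential u using Nat.strong_induction_on generalizing u with
  | _ d ih =>
    by_cases hne : u = v
    · rw [hne]
    obtain ⟨w, hmove, hw, hwv⟩ := huv.exists_bounded_borelMove hu hv hne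
    have := hmove.potential_lt
    have := hwv.potential_le
    exact .head ⟨hmove, hw⟩ (ih _ (by omega) hw hwv rfl)

end PrefixSums

/-- for a `c`-bounded monomial `u`, a `c`-bounded monomial `v` is reachable from `u`
by a chain of Borel moves all of whose intermediate monomials are `c`-bounded if and only if it is
reachable from `u` by an arbitrary chain of Borel moves; i.e. `B^c(u) = B(u)^{≤c}`. -/
theorem stmt_1 {n : ℕ} (c : Fin n → ℕ) (u v : Fin n →₀ ℕ)
    (hu : ∀ i, u i ≤ c i) (hv : ∀ i, v i ≤ c i) :
    Relation.ReflTransGen (fun a b => BorelMove a b ∧ ∀ i, b i ≤ c i) u v ↔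
      Relation.ReflTransGen BorelMove u v :=
  ⟨fun h => ReflTransGen.mono (fun _ _ hab => hab.1) _ _ h,
    fun h => reflTransGen_bounded_of_prefixDominated hu hv (prefixDominated_of_reflTransGen h)⟩
end

section
/- Let I ⊆ S be a monomial ideal generated in a single degree d which has linear quotients with respect to the ordering u_1,…,u_m of G(I), and let c = (c_1,…,c_n) be a vector of non-negative integers. Let u_{i_1},…,u_{i_s} with i_1 < i_2 < … < i_s be the c-bounded elements of G(I). Then I^{≤c} = (u_{i_1},…,u_{i_s}) has linear quotients with respect to this induced ordering u_{i_1},…,u_{i_s}. -/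
/-!
Suppose `(earlier generators) : x^b = (x_k : k ∈ T)`. Every earlier generator `x^s` then has a
variable `k ∈ T` with `b k < s k`, since `x^(s - b)` lies in the colon ideal; and for each `k ∈ T`
some earlier `x^s` divides `x_k x^b`. When `x^b` is `c`-bounded, such an `x^s` is `c`-bounded as
soon as `b k < c k`, while a `c`-bounded `x^s` can only witness variables with `b k < s k ≤ c k`.
Hence the colon ideal of the bounded generators is generated by the `x_k` with `k ∈ T`, `b k < c k`.
-/

open MvPolynomial

namespace MvPolynomial

variable {σ R : Type*} [CommSemiring R]

theorem support_mul_monomial_one (p : MvPolynomial σ R) (b : σ →₀ ℕ) :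
    (p * monomial b 1).support = p.support.map (addRightEmbedding b) :=
  AddMonoidAlgebra.support_coeff_mul_single p _ (by simp) _

theorem mem_colon_span_monomial_iff {S : Set (σ →₀ ℕ)} {b : σ →₀ ℕ} {x : MvPolynomial σ R} :
    x ∈ (Ideal.span ((monomial · (1 : R)) '' S)).colon (Ideal.span {monomial b (1 : R)}) ↔
      ∀ a ∈ x.support, ∃ s ∈ S, s ≤ a + b := by
  simp [mem_ideal_span_monomial_image, support_mul_monomial_one]

variable [Nontrivial R]

theorem monomial_mem_colon_span_monomial_iff {S : Set (σ →₀ ℕ)} {a b : σ →₀ ℕ} :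
    monomial a (1 : R) ∈ (Ideal.span ((monomial · (1 : R)) '' S)).colon
        (Ideal.span {monomial b (1 : R)}) ↔ ∃ s ∈ S, s ≤ a + b := by
  classical
  rw [mem_colon_span_monomial_iff, support_monomial, if_neg one_ne_zero]
  simp

theorem exists_lt_of_colon_span_monomial_eq_span_X {S : Set (σ →₀ ℕ)} {b : σ →₀ ℕ} {T : Set σ}
    (hT : (Ideal.span ((monomial · (1 : R)) '' S)).colon (Ideal.span {monomial b (1 : R)}) =
      Ideal.span (X '' T)) {s : σ →₀ ℕ} (hs : s ∈ S) : ∃ k ∈ T, b k < s k := by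
  classical
  have hmem : monomial (s - b) (1 : R) ∈ Ideal.span (X '' T) :=
    hT ▸ monomial_mem_colon_span_monomial_iff.mpr ⟨s, hs, le_tsub_add⟩
  rw [mem_ideal_span_X_image, support_monomial, if_neg one_ne_zero] at hmem
  obtain ⟨k, hkT, hk⟩ := hmem _ (Finset.mem_singleton_self _)
  exact ⟨k, hkT, by simpa [Nat.sub_eq_zero_iff_le] using hk⟩

theorem colon_span_monomial_bounded_eq_span_X {S : Set (σ →₀ ℕ)} {b : σ →₀ ℕ} {T : Set σ}
    (hT : (Ideal.span ((monomial · (1 : R)) '' S)).colon (Ideal.span {monomial b (1 : R)}) =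
      Ideal.span (X '' T)) {c : σ → ℕ} (hb : ∀ k, b k ≤ c k) :
    (Ideal.span ((monomial · (1 : R)) '' {s ∈ S | ∀ k, s k ≤ c k})).colon
        (Ideal.span {monomial b (1 : R)}) = Ideal.span (X '' {k ∈ T | b k < c k}) := by
  suffices key : ∀ a : σ →₀ ℕ, (∃ s ∈ {s ∈ S | ∀ k, s k ≤ c k}, s ≤ a + b) ↔
      ∃ k ∈ {k ∈ T | b k < c k}, a k ≠ 0 by
    ext x
    rw [mem_colon_span_monomial_iff, mem_ideal_span_X_image]
    exact forall₂_congr fun a _ => key a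
  intro a
  constructor
  · rintro ⟨s, ⟨hsS, hsc⟩, hsa⟩
    obtain ⟨k, hkT, hk⟩ := exists_lt_of_colon_span_monomial_eq_span_X hT hsS
    have hsak : s k ≤ a k + b k := hsa k
    exact ⟨k, ⟨hkT, hk.trans_le (hsc k)⟩, by omega⟩
  · rintro ⟨k, ⟨hkT, hkc⟩, hak⟩
    have hXk : monomial (Finsupp.single k 1) (1 : R) ∈ Ideal.span (X '' T) :=
      Ideal.subset_span ⟨k, hkT, rfl⟩
    rw [← hT, monomial_mem_colon_span_monomial_iff] at hXk
    obtain ⟨s, hsS, hsk⟩ := hXk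
    have hsc : ∀ l, s l ≤ c l := by
      intro l
      have hsl : s l ≤ Finsupp.single k 1 l + b l := hsk l
      rcases eq_or_ne k l with rfl | hkl
      · rw [Finsupp.single_eq_same] at hsl
        omega
      · rw [Finsupp.single_eq_of_ne' hkl, zero_add] at hsl
        exact hsl.trans (hb l)
    have hka : Finsupp.single k 1 ≤ a := Finsupp.single_le_iff.mpr (Nat.one_le_iff_ne_zero.mpr hak)
    exact ⟨s, ⟨hsS, hsc⟩, hsk.trans (add_le_add_left hka b)⟩

end MvPolynomial

theorem stmt_2_general {K : Type*} [Field K] {n m : ℕ} (c : Fin n → ℕ)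
    (u : Fin m → (Fin n →₀ ℕ))
    (hlq : ∀ j : Fin m, ∃ T : Set (Fin n),
      Submodule.colon
        (Ideal.span {p : MvPolynomial (Fin n) K | ∃ i, i < j ∧ p = monomial (u i) 1})
        (Ideal.span {(monomial (u j) (1 : K))})
      = Ideal.span (MvPolynomial.X '' T)) :
    ∀ j : Fin m, (∀ k, u j k ≤ c k) → ∃ T : Set (Fin n),
      Submodule.colon
        (Ideal.span {p : MvPolynomial (Fin n) K |
          ∃ i, i < j ∧ (∀ k, u i k ≤ c k) ∧ p = monomial (u i) 1})
        (Ideal.span {(monomial (u j) (1 : K))})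
      = Ideal.span (MvPolynomial.X '' T) := by
  intro j hj
  obtain ⟨T, hT⟩ := hlq j
  have hearlier : {p : MvPolynomial (Fin n) K | ∃ i, i < j ∧ p = monomial (u i) 1} =
      (monomial · 1) '' (u '' Set.Iio j) := by
    ext; simp [eq_comm]
  have hbounded : {p : MvPolynomial (Fin n) K |
      ∃ i, i < j ∧ (∀ k, u i k ≤ c k) ∧ p = monomial (u i) 1} =
      (monomial · 1) '' {s ∈ u '' Set.Iio j | ∀ k, s k ≤ c k} := by
    ext; simp [eq_comm, and_assoc]
  rw [hearlier] at hT
  rw [hbounded]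
  exact ⟨_, colon_span_monomial_bounded_eq_span_X hT hj⟩

/-- if a monomial ideal `I`, minimally generated in the single degree `d` by the
pairwise distinct monomials `u_1, …, u_m`, has linear quotients with respect to this ordering,
then for any bound vector `c` the ideal `I^{≤c}` generated by the `c`-bounded `u_i` has linear
quotients with respect to the induced ordering. -/
theorem stmt_2 {K : Type*} [Field K] {n m : ℕ} (c : Fin n → ℕ) (d : ℕ)
    (u : Fin m → (Fin n →₀ ℕ)) (hinj : Function.Injective u)
    (hdeg : ∀ i, (∑ k, u i k) = d)
    (hlq : ∀ j : Fin m, ∃ T : Set (Fin n),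
      Submodule.colon
        (Ideal.span {p : MvPolynomial (Fin n) K | ∃ i, i < j ∧ p = monomial (u i) 1})
        (Ideal.span {(monomial (u j) (1 : K))})
      = Ideal.span (MvPolynomial.X '' T)) :
    ∀ j : Fin m, (∀ k, u j k ≤ c k) → ∃ T : Set (Fin n),
      Submodule.colon
        (Ideal.span {p : MvPolynomial (Fin n) K |
          ∃ i, i < j ∧ (∀ k, u i k ≤ c k) ∧ p = monomial (u i) 1})
        (Ideal.span {(monomial (u j) (1 : K))})
      = Ideal.span (MvPolynomial.X '' T) :=
  stmt_2_general c u hlq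
end

section
/- Let c = (c_1,…,c_n) be a vector of non-negative integers and d a positive integer with c_1 + … + c_n ≥ d (so that I_{c,n,d} ≠ 0). Then there exists a c-bounded monomial u of degree d such that I_{c,n,d} = B^c(u). Explicitly, one may take u = x_n^d when c_n > d; and when c_n ≤ d one may take u = x_{n−m}^r · x_{n−m+1}^{c_{n−m+1}} ··· x_n^{c_n}, where m = max{ j : c_{n−j+1} + … + c_n ≤ d } and r = d − (c_{n−m+1} + … + c_n) (interpreting u = x_1^{c_1}···x_n^{c_n} when m = n). -/
open MvPolynomial

/-- The Veronese type ideal `I_{c,n,d}`, generated by all `c`-bounded monomials of degree `d`. -/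
noncomputable def veroneseIdeal (K : Type*) [Field K] {n : ℕ} (c : Fin n → ℕ) (d : ℕ) :
    Ideal (MvPolynomial (Fin n) K) :=
  Ideal.span {p | ∃ a : Fin n →₀ ℕ, (∑ i, a i) = d ∧ (∀ i, a i ≤ c i) ∧ p = monomial a 1}

/-- The `c`-bounded strongly stable principal ideal `B^c(u)`: the ideal generated by all monomials
obtainable from `u` by Borel moves all of whose intermediate monomials are `c`-bounded. -/
noncomputable def BcIdeal (K : Type*) [Field K] {n : ℕ} (c : Fin n → ℕ) (u : Fin n →₀ ℕ) :
    Ideal (MvPolynomial (Fin n) K) :=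
  Ideal.span {p | ∃ v : Fin n →₀ ℕ,
    Relation.ReflTransGen (fun x y => BorelMove x y ∧ ∀ i, y i ≤ c i) u v ∧ p = monomial v 1}

/-- The sum `c_{n-j+1} + ⋯ + c_n` of the last `j` entries of `c`. -/
def tailSum {n : ℕ} (c : Fin n → ℕ) (j : ℕ) : ℕ :=
  ∑ i ∈ Finset.univ.filter (fun i : Fin n => n - j ≤ (i : ℕ)), c i

open Finset
variable {n : ℕ}
def tSf (f : Fin n → ℕ) (k : ℕ) : ℕ :=
  ∑ i ∈ Finset.univ.filter fun i : Fin n => k ≤ (i : ℕ), f i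

lemma tSf_zero (f : Fin n → ℕ) : tSf f 0 = ∑ i, f i := by
  simp [tSf]

lemma tSf_le_sum (f : Fin n → ℕ) (k : ℕ) : tSf f k ≤ ∑ i, f i :=
  Finset.sum_le_sum_of_subset (Finset.filter_subset _ _)

lemma tSf_eq_zero (f : Fin n → ℕ) {k : ℕ} (hk : n ≤ k) : tSf f k = 0 := by
  rw [tSf, Finset.filter_false_of_mem, Finset.sum_empty]
  intro i _
  have := i.isLt
  omega

lemma hS_add_tSf (f : Fin n → ℕ) (k : ℕ) :
    (∑ i ∈ Finset.univ.filter fun i : Fin n => (i : ℕ) < k, f i) + tSf f k = ∑ i, f i := by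
  rw [tSf, ← Finset.sum_filter_add_sum_filter_not Finset.univ (fun i : Fin n => (i : ℕ) < k) f]
  simp [not_lt]

lemma tSf_add (f g : Fin n → ℕ) (k : ℕ) : tSf (f + g) k = tSf f k + tSf g k := by
  simp [tSf, Finset.sum_add_distrib]

lemma tSf_single (i : Fin n) (m k : ℕ) :
    tSf (⇑(Finsupp.single i m)) k = if k ≤ (i : ℕ) then m else 0 := by
  rw [tSf, Finset.sum_filter]
  rw [Finset.sum_eq_single i]
  · simp [Finsupp.single_apply]
  · intro b _ hb
    simp [Finsupp.single_apply, Ne.symm hb]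
  · simp

lemma tSf_succ (f : Fin n → ℕ) (l : ℕ) (hl : l < n) :
    tSf f l = f ⟨l, hl⟩ + tSf f (l + 1) := by
  rw [tSf, tSf, Finset.sum_filter, Finset.sum_filter]
  have key : ∀ i : Fin n, (if l ≤ (i : ℕ) then f i else 0)
      = (if i = ⟨l, hl⟩ then f i else 0) + (if l + 1 ≤ (i : ℕ) then f i else 0) := by
    intro i
    by_cases h : i = ⟨l, hl⟩
    · subst h; simp
    · have : (i : ℕ) ≠ l := fun hc => h (Fin.ext hc)
      simp [h]
      split_ifs <;> omega
  rw [Finset.sum_congr rfl fun i _ => key i, Finset.sum_add_distrib,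
    Finset.sum_ite_eq' Finset.univ ⟨l, hl⟩ f]
  simp

lemma single_le_of_ne_zero {x : Fin n →₀ ℕ} {j : Fin n} (hj : x j ≠ 0) :
    (Finsupp.single j 1 : Fin n →₀ ℕ) ≤ x := by
  rw [Finsupp.le_def]
  intro l
  rcases eq_or_ne l j with rfl | h
  · simp; omega
  · simp [Finsupp.single_apply, Ne.symm h]

lemma sub_add_single_cancel {x : Fin n →₀ ℕ} {j : Fin n} (hj : x j ≠ 0) :
    x - Finsupp.single j 1 + Finsupp.single j 1 = x :=
  tsub_add_cancel_of_le (single_le_of_ne_zero hj)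

lemma tS_move {x : Fin n →₀ ℕ} {i j : Fin n} (hj : x j ≠ 0) (k : ℕ) :
    tSf ((x - Finsupp.single j 1 + Finsupp.single i 1 : Fin n →₀ ℕ) : Fin n → ℕ) k
      + (if k ≤ (j : ℕ) then 1 else 0)
      = tSf (x : Fin n → ℕ) k + (if k ≤ (i : ℕ) then 1 else 0) := by
  have h1 : tSf (x : Fin n → ℕ) k
      = tSf ((x - Finsupp.single j 1 : Fin n →₀ ℕ) : Fin n → ℕ) k
        + (if k ≤ (j : ℕ) then 1 else 0) := by
    conv_lhs => rw [← sub_add_single_cancel hj]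
    rw [Finsupp.coe_add, tSf_add, tSf_single]
  rw [Finsupp.coe_add, tSf_add, tSf_single, h1]
  ring

lemma move_sum {x : Fin n →₀ ℕ} {i j : Fin n} (hj : x j ≠ 0) :
    (∑ l, (x - Finsupp.single j 1 + Finsupp.single i 1 : Fin n →₀ ℕ) l) = ∑ l, x l := by
  have := tS_move (i := i) hj 0
  simp only [Nat.zero_le, if_true, tSf_zero] at this
  omega

lemma reach (c : Fin n → ℕ) (a : Fin n →₀ ℕ) (ha : ∀ i, a i ≤ c i) :
    ∀ M : ℕ, ∀ cur : Fin n →₀ ℕ,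
      (∑ k ∈ Finset.range (n+1), (tSf (cur : Fin n → ℕ) k - tSf (a : Fin n → ℕ) k)) ≤ M →
      (∀ i, cur i ≤ c i) → (∑ i, cur i) = (∑ i, a i) →
      (∀ k, tSf (a : Fin n → ℕ) k ≤ tSf (cur : Fin n → ℕ) k) →
      Relation.ReflTransGen (fun x y => BorelMove x y ∧ ∀ i, y i ≤ c i) cur a := by
  intro M
  induction M with
  | zero =>
    intro cur hM hb hsum hdom
    have hz : ∀ k ∈ Finset.range (n+1), tSf (cur : Fin n → ℕ) k - tSf (a : Fin n → ℕ) k = 0 := by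
      intro k hk
      have := Finset.sum_eq_zero_iff.mp (Nat.le_zero.mp hM) k hk
      omega
    have heq : ∀ k, tSf (cur : Fin n → ℕ) k = tSf (a : Fin n → ℕ) k := by
      intro k
      by_cases h : k ≤ n
      · have := hz k (Finset.mem_range.mpr (by omega))
        have := hdom k
        omega
      · rw [tSf_eq_zero _ (by omega : n ≤ k), tSf_eq_zero _ (by omega : n ≤ k)]
    have : cur = a := by
      ext l
      have h1 := tSf_succ (cur : Fin n → ℕ) (l : ℕ) l.isLt
      have h2 := tSf_succ (a : Fin n → ℕ) (l : ℕ) l.isLt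
      rw [Fin.eta] at h1 h2
      have e1 := heq (l : ℕ); have e2 := heq ((l : ℕ) + 1)
      omega
    rw [this]
  | succ M ih =>
    intro cur hM hb hsum hdom
    by_cases hca : cur = a
    · rw [hca]
    have hne : ∃ l, cur l ≠ a l := by
      by_contra h
      push_neg at h
      exact hca (Finsupp.ext h)
    obtain ⟨l0, hl0⟩ := hne
    have hSi : (Finset.univ.filter fun i : Fin n => cur i < a i).Nonempty := by
      by_contra h
      rw [Finset.not_nonempty_iff_eq_empty, Finset.filter_eq_empty_iff] at h
      have hle : ∀ i ∈ Finset.univ, a i ≤ cur i := fun i _ => by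
        have := h (Finset.mem_univ i); omega
      have : (∑ i, a i) < ∑ i, cur i :=
        Finset.sum_lt_sum hle ⟨l0, Finset.mem_univ l0, by have := h (Finset.mem_univ l0); omega⟩
      omega
    have hSj : (Finset.univ.filter fun i : Fin n => a i < cur i).Nonempty := by
      by_contra h
      rw [Finset.not_nonempty_iff_eq_empty, Finset.filter_eq_empty_iff] at h
      have hle : ∀ i ∈ Finset.univ, cur i ≤ a i := fun i _ => by
        have := h (Finset.mem_univ i); omega
      have : (∑ i, cur i) < ∑ i, a i :=
        Finset.sum_lt_sum hle ⟨l0, Finset.mem_univ l0, by have := h (Finset.mem_univ l0); omega⟩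
      omega
    set i0 := (Finset.univ.filter fun i : Fin n => cur i < a i).min' hSi with hi0def
    set j0 := (Finset.univ.filter fun i : Fin n => a i < cur i).min' hSj with hj0def
    have hi0 : cur i0 < a i0 := by
      have := Finset.min'_mem _ hSi
      simp only [Finset.mem_filter] at this
      exact this.2
    have hj0 : a j0 < cur j0 := by
      have := Finset.min'_mem _ hSj
      simp only [Finset.mem_filter] at this
      exact this.2
    have hi0min : ∀ l : Fin n, l < i0 → a l ≤ cur l := by
      intro l hl
      by_contra h
      have : i0 ≤ l := Finset.min'_le _ _ (by simp; omega)
      exact absurd hl (not_lt.mpr this)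
    have hj0min : ∀ l : Fin n, l < j0 → cur l ≤ a l := by
      intro l hl
      by_contra h
      have : j0 ≤ l := Finset.min'_le _ _ (by simp; omega)
      exact absurd hl (not_lt.mpr this)
    have hij : i0 < j0 := by
      by_contra h
      push_neg at h  -- j0 ≤ i0
      have hhead : (∑ l ∈ Finset.univ.filter fun l : Fin n => (l : ℕ) < (j0 : ℕ) + 1, a l)
          < ∑ l ∈ Finset.univ.filter fun l : Fin n => (l : ℕ) < (j0 : ℕ) + 1, cur l := by
        apply Finset.sum_lt_sum
        · intro l hl
          simp only [Finset.mem_filter] at hl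
          rcases lt_or_eq_of_le (Nat.lt_succ_iff.mp hl.2) with h' | h'
          · have hlj : l < j0 := by exact h'
            have hli : l < i0 := lt_of_lt_of_le hlj h
            exact hi0min l hli
          · have : l = j0 := Fin.ext h'
            rw [this]; omega
        · exact ⟨j0, by simp, hj0⟩
      have t1 := hS_add_tSf (a : Fin n → ℕ) ((j0 : ℕ) + 1)
      have t2 := hS_add_tSf (cur : Fin n → ℕ) ((j0 : ℕ) + 1)
      have := hdom ((j0 : ℕ) + 1)
      omega
    have hj0pos : cur j0 ≠ 0 := by omega
    set b := cur - Finsupp.single j0 1 + Finsupp.single i0 1 with hbdef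
    have hmv : ∀ k, tSf (b : Fin n → ℕ) k + (if k ≤ (j0 : ℕ) then 1 else 0)
        = tSf (cur : Fin n → ℕ) k + (if k ≤ (i0 : ℕ) then 1 else 0) :=
      fun k => tS_move hj0pos k
    -- strict dominance in the middle range
    have hstrict : ∀ k, (i0 : ℕ) < k → k ≤ (j0 : ℕ) →
        tSf (a : Fin n → ℕ) k < tSf (cur : Fin n → ℕ) k := by
      intro k hk1 hk2
      have hhead : (∑ l ∈ Finset.univ.filter fun l : Fin n => (l : ℕ) < k, cur l)
          < ∑ l ∈ Finset.univ.filter fun l : Fin n => (l : ℕ) < k, a l := by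
        apply Finset.sum_lt_sum
        · intro l hl
          simp only [Finset.mem_filter] at hl
          have : l < j0 := by
            have : (l : ℕ) < (j0 : ℕ) := by omega
            exact this
          exact hj0min l this
        · exact ⟨i0, by simp only [Finset.mem_filter, Finset.mem_univ, true_and]; exact hk1, hi0⟩
      have t1 := hS_add_tSf (a : Fin n → ℕ) k
      have t2 := hS_add_tSf (cur : Fin n → ℕ) k
      omega
    have hbval : ∀ l, b l = cur l - (if j0 = l then 1 else 0) + (if i0 = l then 1 else 0) := by
      intro l
      rw [hbdef]
      simp only [Finsupp.add_apply, Finsupp.tsub_apply, Finsupp.single_apply]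
    have hbb : ∀ l, b l ≤ c l := by
      intro l
      have hv := hbval l
      have hne : i0 ≠ j0 := Fin.ne_of_lt hij
      by_cases e1 : i0 = l
      · subst e1
        simp [Ne.symm hne] at hv
        have := ha i0
        omega
      · by_cases e2 : j0 = l
        · subst e2
          simp [e1, Ne.symm e1] at hv
          have := hb j0
          omega
        · simp [e1, e2] at hv
          have := hb l
          omega
    have hbsum : (∑ l, b l) = ∑ l, a l := by
      rw [hbdef, move_sum hj0pos, hsum]
    have hbdom : ∀ k, tSf (a : Fin n → ℕ) k ≤ tSf (b : Fin n → ℕ) k := by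
      intro k
      have h1 := hmv k
      have h2 := hdom k
      by_cases hk1 : k ≤ (i0 : ℕ)
      · have : k ≤ (j0 : ℕ) := le_trans hk1 (le_of_lt hij)
        simp [hk1, this] at h1
        omega
      · by_cases hk2 : k ≤ (j0 : ℕ)
        · have := hstrict k (by omega) hk2
          simp [hk1, hk2] at h1
          omega
        · simp [hk1, hk2] at h1
          omega
    have hmeas : (∑ k ∈ Finset.range (n+1),
        (tSf (b : Fin n → ℕ) k - tSf (a : Fin n → ℕ) k)) ≤ M := by
      have hlt : (∑ k ∈ Finset.range (n+1),
          (tSf (b : Fin n → ℕ) k - tSf (a : Fin n → ℕ) k))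
          < ∑ k ∈ Finset.range (n+1),
          (tSf (cur : Fin n → ℕ) k - tSf (a : Fin n → ℕ) k) := by
        apply Finset.sum_lt_sum
        · intro k _
          have h1 := hmv k
          split_ifs at h1 <;> omega
        · refine ⟨(j0 : ℕ), Finset.mem_range.mpr (by have := j0.isLt; omega), ?_⟩
          have h1 := hmv (j0 : ℕ)
          have hile : ¬ ((j0 : ℕ) ≤ (i0 : ℕ)) := by
            have : (i0 : ℕ) < (j0 : ℕ) := hij
            omega
          simp [hile] at h1
          have := hstrict (j0 : ℕ) (by have : (i0 : ℕ) < (j0 : ℕ) := hij; omega) (le_refl _)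
          omega
      omega
    have hstep : BorelMove cur b ∧ ∀ i, b i ≤ c i :=
      ⟨⟨i0, j0, hij, hj0pos, rfl⟩, hbb⟩
    exact Relation.ReflTransGen.head hstep (ih b hmeas hbb hbsum hbdom)
lemma tSf_mono {f g : Fin n → ℕ} (h : ∀ i, f i ≤ g i) (k : ℕ) : tSf f k ≤ tSf g k :=
  Finset.sum_le_sum fun i _ => h i

lemma reach_invariant (c : Fin n → ℕ) {u v : Fin n →₀ ℕ}
    (h : Relation.ReflTransGen (fun x y => BorelMove x y ∧ ∀ i, y i ≤ c i) u v)
    (hub : ∀ i, u i ≤ c i) :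
    (∑ i, v i) = (∑ i, u i) ∧ ∀ i, v i ≤ c i := by
  induction h with
  | refl => exact ⟨rfl, hub⟩
  | tail hxy hstep ih =>
    obtain ⟨⟨i, j, hij, hjne, rfl⟩, hbnd⟩ := hstep
    exact ⟨(move_sum hjne).trans ih.1, hbnd⟩

lemma ideal_eq (K : Type*) [Field K] (c : Fin n → ℕ) (d : ℕ) (u : Fin n →₀ ℕ)
    (hub : ∀ i, u i ≤ c i) (hud : (∑ i, u i) = d)
    (hdom : ∀ a : Fin n →₀ ℕ, (∑ i, a i) = d → (∀ i, a i ≤ c i) →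
      ∀ k, tSf (a : Fin n → ℕ) k ≤ tSf (u : Fin n → ℕ) k) :
    veroneseIdeal K c d = BcIdeal K c u := by
  unfold veroneseIdeal BcIdeal
  congr 1
  ext p
  simp only [Set.mem_setOf_eq]
  constructor
  · rintro ⟨a, hsum, hbnd, rfl⟩
    exact ⟨a, reach c a hbnd
      (∑ k ∈ Finset.range (n+1), (tSf (u : Fin n → ℕ) k - tSf (a : Fin n → ℕ) k)) u le_rfl
      hub (by rw [hud, hsum]) (hdom a hsum hbnd), rfl⟩
  · rintro ⟨v, hr, rfl⟩
    obtain ⟨h1, h2⟩ := reach_invariant c hr hub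
    exact ⟨v, by rw [h1, hud], h2, rfl⟩

lemma tailSum_eq_tSf (c : Fin n → ℕ) (j : ℕ) : tailSum c j = tSf c (n - j) := rfl

lemma tSf_succ' (f : Fin n → ℕ) {l l' : ℕ} (hl : l < n) (h : l' = l + 1) :
    tSf f l = f ⟨l, hl⟩ + tSf f l' := by
  subst h; exact tSf_succ f l hl

lemma tailSum_one (hn : 0 < n) (c : Fin n → ℕ) : tailSum c 1 = c ⟨n - 1, by omega⟩ := by
  have h := tSf_succ' c (show n - 1 < n by omega) (show n = n - 1 + 1 by omega)
  rw [tSf_eq_zero c (le_refl n)] at h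
  calc tailSum c 1 = tSf c (n - 1) := rfl
    _ = c ⟨n - 1, by omega⟩ + 0 := h
    _ = c ⟨n - 1, by omega⟩ := by omega

lemma tailSum_succ (c : Fin n → ℕ) {m : ℕ} (hm : m < n) :
    tailSum c (m + 1) = c ⟨n - m - 1, by omega⟩ + tailSum c m := by
  have h := tSf_succ' c (show n - m - 1 < n by omega) (show n - m = n - m - 1 + 1 by omega)
  have e1 : n - (m + 1) = n - m - 1 := by omega
  calc tailSum c (m + 1) = tSf c (n - (m + 1)) := rfl
    _ = tSf c (n - m - 1) := by rw [e1]
    _ = c ⟨n - m - 1, by omega⟩ + tailSum c m := h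

section CaseB
variable (c : Fin n → ℕ) (d m : ℕ)

/-- The explicit monomial exponent in case B. -/
def caseBfun : Fin n → ℕ := fun i : Fin n =>
  if n - m ≤ (i : ℕ) then c i else if (i : ℕ) = n - m - 1 then d - tailSum c m else 0

lemma caseB_tSf_high {k : ℕ} (hk : n - m ≤ k) : tSf (caseBfun c d m) k = tSf c k := by
  refine Finset.sum_congr rfl fun i hi => ?_
  simp only [Finset.mem_filter] at hi
  have : n - m ≤ (i : ℕ) := le_trans hk hi.2
  simp [caseBfun, this]

lemma caseB_tSf_low (hn : 0 < n) (hmn : m < n) (hmd : tailSum c m ≤ d)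
    {k : ℕ} (hk : k ≤ n - m - 1) : tSf (caseBfun c d m) k = d := by
  have hbase : tSf (caseBfun c d m) (n - m - 1) = d := by
    have h := tSf_succ' (caseBfun c d m) (show n - m - 1 < n by omega)
      (show n - m = n - m - 1 + 1 by omega)
    have hv : ∀ hh : n - m - 1 < n, caseBfun c d m ⟨n - m - 1, hh⟩ = d - tailSum c m := by
      intro hh
      simp only [caseBfun]
      have h1 : ¬ (n - m ≤ n - m - 1) := by omega
      simp [h1]
    rw [h, caseB_tSf_high c d m (le_refl _), hv, ← tailSum_eq_tSf]
    omega
  have step : ∀ l, l < n - m - 1 → tSf (caseBfun c d m) l = tSf (caseBfun c d m) (l + 1) := by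
    intro l hl
    rw [tSf_succ (caseBfun c d m) l (by omega)]
    have : caseBfun c d m ⟨l, by omega⟩ = 0 := by
      simp only [caseBfun]
      have h1 : ¬ (n - m ≤ l) := by omega
      have h2 : ¬ (l = n - m - 1) := by omega
      simp [h1, h2]
    omega
  have key : ∀ j, j ≤ n - m - 1 → tSf (caseBfun c d m) (n - m - 1 - j) = d := by
    intro j
    induction j with
    | zero => intro _; simpa using hbase
    | succ j ihj =>
      intro hj
      have e : n - m - 1 - (j + 1) + 1 = n - m - 1 - j := by omega
      rw [step _ (by omega), e]
      exact ihj (by omega)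
  have e : n - m - 1 - (n - m - 1 - k) = k := by omega
  have := key (n - m - 1 - k) (by omega)
  rwa [e] at this
end CaseB
lemma caseB_bounded (c : Fin n → ℕ) (d m : ℕ)
    (hnext : ∀ _ : m < n, d < tailSum c (m + 1)) (hmd : tailSum c m ≤ d) :
    ∀ i, caseBfun c d m i ≤ c i := by
  intro i
  unfold caseBfun
  split_ifs with h1 h2
  · exact le_rfl
  · have hmn' : m < n := by
      rcases Nat.lt_or_ge m n with h | h
      · exact h
      · exfalso; apply h1; omega
    have hA := hnext hmn'
    have hB := tailSum_succ c hmn'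
    have hC : c (⟨n - m - 1, by omega⟩ : Fin n) = c i := by
      congr 1
      exact Fin.ext h2.symm
    omega
  · exact Nat.zero_le _

lemma caseB_sum (hn : 0 < n) (c : Fin n → ℕ) (d m : ℕ) (hmn : m ≤ n)
    (hmd : tailSum c m ≤ d) (hcd : d ≤ ∑ i, c i) :
    tSf (caseBfun c d m) 0 = d := by
  rcases Nat.lt_or_ge m n with hlt | hge
  · exact caseB_tSf_low c d m hn hlt hmd (by omega)
  · have hT : tSf (caseBfun c d m) 0 = tSf c 0 := caseB_tSf_high c d m (by omega)
    have h0 : tailSum c m = tSf c (n - m) := rfl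
    have e : n - m = 0 := by omega
    rw [e, tSf_zero] at h0
    rw [hT, tSf_zero]
    omega

lemma caseB_dom (hn : 0 < n) (c : Fin n → ℕ) (d m : ℕ) (hmd : tailSum c m ≤ d)
    (a : Fin n →₀ ℕ) (hsum : (∑ i, a i) = d) (hbnd : ∀ i, a i ≤ c i) (k : ℕ) :
    tSf (a : Fin n → ℕ) k ≤ tSf (caseBfun c d m) k := by
  rcases Nat.lt_or_ge k (n - m) with hk | hk
  · have hlt : m < n := by omega
    rw [caseB_tSf_low c d m hn hlt hmd (by omega)]
    calc tSf (a : Fin n → ℕ) k ≤ ∑ i, a i := tSf_le_sum _ _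
      _ = d := hsum
  · rw [caseB_tSf_high c d m hk]
    exact tSf_mono hbnd k


/-- if `c_1 + ⋯ + c_n ≥ d ≥ 1`, then `I_{c,n,d} = B^c(u)` for some `c`-bounded
monomial `u` of degree `d`; explicitly, one may take `u = x_n^d` when `c_n > d`, and
`u = x_{n-m}^r x_{n-m+1}^{c_{n-m+1}} ⋯ x_n^{c_n}` with `m = max{ j : c_{n-j+1}+⋯+c_n ≤ d }` and
`r = d - (c_{n-m+1}+⋯+c_n)` when `c_n ≤ d` (interpreted as `u = x^c` when `m = n`). -/
theorem stmt_3 {K : Type*} [Field K] {n : ℕ} (hn : 0 < n) (c : Fin n → ℕ) (d : ℕ)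
    (hd : 0 < d) (hcd : d ≤ ∑ i, c i) :
    (∃ u : Fin n →₀ ℕ, (∀ i, u i ≤ c i) ∧ (∑ i, u i) = d ∧
      veroneseIdeal K c d = BcIdeal K c u) ∧
    (d < c ⟨n - 1, by omega⟩ →
      veroneseIdeal K c d = BcIdeal K c (Finsupp.single ⟨n - 1, by omega⟩ d)) ∧
    (c ⟨n - 1, by omega⟩ ≤ d → ∀ m : ℕ, IsGreatest {j | 1 ≤ j ∧ j ≤ n ∧ tailSum c j ≤ d} m →
      veroneseIdeal K c d = BcIdeal K c (Finsupp.equivFunOnFinite.symm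
        (fun i : Fin n => if n - m ≤ (i : ℕ) then c i
          else if (i : ℕ) = n - m - 1 then d - tailSum c m else 0))) := by
  have hn1 : n - 1 < n := by omega
  -- facts about the single monomial
  have singleBnd : d ≤ c ⟨n - 1, hn1⟩ → ∀ i, (Finsupp.single ⟨n - 1, hn1⟩ d : Fin n →₀ ℕ) i ≤ c i := by
    intro hcnd i
    simp only [Finsupp.single_apply]
    split_ifs with h
    · rw [← h]; exact hcnd
    · exact Nat.zero_le _
  have singleSum : (∑ i, (Finsupp.single ⟨n - 1, hn1⟩ d : Fin n →₀ ℕ) i) = d := by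
    have h0 := tSf_single (⟨n - 1, hn1⟩ : Fin n) d 0
    rw [if_pos (Nat.zero_le _)] at h0
    rw [← tSf_zero]
    exact h0
  have partA : d ≤ c ⟨n - 1, hn1⟩ →
      veroneseIdeal K c d = BcIdeal K c (Finsupp.single ⟨n - 1, hn1⟩ d) := by
    intro hcnd
    apply ideal_eq K c d _ (singleBnd hcnd) singleSum
    intro a hsum hbnd k
    rw [tSf_single]
    by_cases hk : k ≤ n - 1
    · rw [if_pos hk]
      calc tSf (a : Fin n → ℕ) k ≤ ∑ i, a i := tSf_le_sum _ _
        _ = d := hsum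
    · rw [if_neg hk, tSf_eq_zero (a : Fin n → ℕ) (by omega : n ≤ k)]
  have partB : ∀ m : ℕ, IsGreatest {j | 1 ≤ j ∧ j ≤ n ∧ tailSum c j ≤ d} m →
      veroneseIdeal K c d = BcIdeal K c (Finsupp.equivFunOnFinite.symm (caseBfun c d m)) := by
    intro m hm
    obtain ⟨⟨hm1, hmn, hmd⟩, hmax⟩ := hm
    have hnext : ∀ _ : m < n, d < tailSum c (m + 1) := by
      intro hlt
      by_contra hcon
      push_neg at hcon
      have : m + 1 ≤ m := hmax ⟨by omega, by omega, hcon⟩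
      omega
    have hcoe : ((Finsupp.equivFunOnFinite.symm (caseBfun c d m) : Fin n →₀ ℕ) : Fin n → ℕ)
        = caseBfun c d m := rfl
    apply ideal_eq K c d
    · intro i
      exact caseB_bounded c d m hnext hmd i
    · rw [← tSf_zero, hcoe]
      exact caseB_sum hn c d m hmn hmd hcd
    · intro a hsum hbnd k
      rw [hcoe]
      exact caseB_dom hn c d m hmd a hsum hbnd k
  refine ⟨?_, fun h => partA (le_of_lt h), fun _ m hm => partB m hm⟩
  by_cases hc : d ≤ c ⟨n - 1, hn1⟩
  · exact ⟨Finsupp.single ⟨n - 1, hn1⟩ d, singleBnd hc, singleSum, partA hc⟩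
  · push_neg at hc
    have hP1 : 1 ≤ 1 ∧ 1 ≤ n ∧ tailSum c 1 ≤ d :=
      ⟨le_rfl, hn, by rw [tailSum_one hn c]; exact le_of_lt hc⟩
    set m := Nat.findGreatest (fun j => 1 ≤ j ∧ j ≤ n ∧ tailSum c j ≤ d) n with hmdef
    have hmem : 1 ≤ m ∧ m ≤ n ∧ tailSum c m ≤ d := Nat.findGreatest_spec (P := fun j => 1 ≤ j ∧ j ≤ n ∧ tailSum c j ≤ d) hn hP1
    have hG : IsGreatest {j | 1 ≤ j ∧ j ≤ n ∧ tailSum c j ≤ d} m :=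
      ⟨hmem, fun j hj => Nat.le_findGreatest hj.2.1 hj⟩
    refine ⟨Finsupp.equivFunOnFinite.symm (caseBfun c d m), ?_, ?_, partB m hG⟩
    · intro i
      refine caseB_bounded c d m ?_ hmem.2.2 i
      intro hlt
      by_contra hcon
      push_neg at hcon
      have : m + 1 ≤ m := Nat.le_findGreatest (by omega) ⟨by omega, by omega, hcon⟩
      omega
    · have hcoe : ((Finsupp.equivFunOnFinite.symm (caseBfun c d m) : Fin n →₀ ℕ) : Fin n → ℕ)
          = caseBfun c d m := rfl
      rw [← tSf_zero, hcoe]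
      exact caseB_sum hn c d m hmem.2.1 hmem.2.2 hcd
end

section
/- Let c = (c_1,…,c_n) be a vector of non-negative integers and u ∈ S a c-bounded monomial. Then the c-bounded strongly stable principal ideal B^c(u) has linear quotients with respect to a suitable ordering of its minimal monomial generators. (This is the case j = 0 of the paper's theorem that all homological shift ideals HS_j(B^c(u)) have linear quotients.) -/
/-!
List the generators of `B^c(u)` in decreasing lexicographic order. If `v` precedes `w`, let `t`
be the first index where they differ, so `w_t < v_t`; as `v` and `w` have the same degree, `w` has
a nonzero exponent at some `s > t`. The Borel move `x_t · w / x_s` is still `c`-bounded (its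
`t`-th exponent is at most `v_t ≤ c_t`) and lexicographically larger than `w`, so it is an earlier
generator dividing `x_t · w`. Hence `x_t` lies in the colon ideal and divides `v / gcd(v, w)`,
which is exactly what makes a monomial colon ideal generated by variables.
-/

open MvPolynomial

namespace MvPolynomial

variable {σ R : Type*} [CommSemiring R]

theorem colon_span_monomial_eq_span_X (S : Set (σ →₀ ℕ)) (w : σ →₀ ℕ)
    (h : ∀ v ∈ S, ∃ t, w t < v t ∧ ∃ v' ∈ S, v' ≤ w + Finsupp.single t 1) :
    (Ideal.span ((fun s => monomial s (1 : R)) '' S)).colon (Ideal.span {monomial w (1 : R)}) =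
      Ideal.span (X '' {t | ∃ v ∈ S, v ≤ w + Finsupp.single t 1}) := by
  apply le_antisymm
  · intro f hf
    rw [Ideal.mem_colon_span_singleton, mem_ideal_span_monomial_image] at hf
    rw [mem_ideal_span_X_image]
    intro μ hμ
    have hμw : μ + w ∈ (f * monomial w 1).support := by
      rwa [mem_support_iff, coeff_mul_monomial, mul_one, ← mem_support_iff]
    obtain ⟨v, hvS, hvle⟩ := hf _ hμw
    obtain ⟨t, hwv, hT⟩ := h v hvS
    have hvt := hvle t
    exact ⟨t, hT, by simp only [Finsupp.add_apply] at hvt; omega⟩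
  · rw [Ideal.span_le]
    rintro _ ⟨t, ⟨v, hvS, hvle⟩, rfl⟩
    rw [SetLike.mem_coe, Ideal.mem_colon_span_singleton, X, monomial_mul, one_mul, add_comm]
    refine mem_ideal_span_monomial_image.mpr fun x hx => ?_
    obtain rfl := Finset.mem_singleton.mp (support_monomial_subset hx)
    exact ⟨v, hvS, hvle⟩

end MvPolynomial

theorem Finset.exists_strictAnti_enum {α : Type*} [LinearOrder α] (s : Finset α) :
    ∃ f : Fin s.card → α, StrictAnti f ∧ Set.range f = s := by
  let e := (s.map OrderDual.toDual.toEmbedding).orderEmbOfFin (Finset.card_map _)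
  refine ⟨fun i => OrderDual.ofDual (e i), fun i j hij => e.strictMono hij, ?_⟩
  rw [Set.range_comp', Finset.range_orderEmbOfFin, Finset.coe_map, Set.image_image]
  exact Set.image_id _

theorem Finsupp.exists_gt_ne_zero_of_degree_le {σ : Type*} [Fintype σ] [LinearOrder σ]
    {v w : σ →₀ ℕ} {t : σ} (hagree : ∀ d < t, w d = v d) (ht : w t < v t)
    (hdeg : v.degree ≤ w.degree) : ∃ s, t < s ∧ w s ≠ 0 := by
  by_contra! hzero
  set L : Finset σ := {k | k ≤ t}
  have hw : w.degree = ∑ k ∈ L, w k := by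
    rw [degree_eq_sum]
    refine (Finset.sum_subset (Finset.subset_univ _) fun k _ hk => ?_).symm
    exact hzero k (lt_of_not_ge fun h => hk ((Finset.mem_filter_univ k).mpr h))
  have hlt : ∑ k ∈ L, w k < ∑ k ∈ L, v k := by
    refine Finset.sum_lt_sum (fun d hd => ?_) ⟨t, (Finset.mem_filter_univ t).mpr le_rfl, ht⟩
    rcases ((Finset.mem_filter_univ d).mp hd).lt_or_eq with hdt | rfl
    · exact (hagree d hdt).le
    · exact ht.le
  have hv : ∑ k ∈ L, v k ≤ v.degree := by
    rw [degree_eq_sum]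
    exact Finset.sum_le_sum_of_subset (Finset.subset_univ _)
  omega

theorem Finsupp.tsub_single_add_single_apply {σ : Type*} [DecidableEq σ] (a : σ →₀ ℕ)
    (i j k : σ) :
    (a - Finsupp.single j 1 + Finsupp.single i 1 : σ →₀ ℕ) k =
      a k - (if j = k then 1 else 0) + (if i = k then 1 else 0) := by
  simp only [Finsupp.add_apply, Finsupp.tsub_apply, Finsupp.single_apply]

namespace BorelMove

variable {n : ℕ} {a b : Fin n →₀ ℕ}

theorem degree_eq (h : BorelMove a b) : b.degree = a.degree := by
  obtain ⟨i, j, -, haj, rfl⟩ := h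
  have hja : Finsupp.single j 1 ≤ a := Finsupp.single_le_iff.mpr (Nat.one_le_iff_ne_zero.mpr haj)
  conv_rhs => rw [← tsub_add_cancel_of_le hja]
  simp only [map_add, Finsupp.degree_single]

theorem toLex_lt (h : BorelMove a b) : toLex a < toLex b := by
  obtain ⟨i, j, hij, -, rfl⟩ := h
  refine Finsupp.lex_def.mpr ⟨i, fun d hdi => ?_, ?_⟩
  · simp only [ofLex_toLex, Finsupp.tsub_single_add_single_apply, if_neg (hdi.trans hij).ne',
      if_neg hdi.ne', tsub_zero, add_zero]
  · simp [Finsupp.tsub_single_add_single_apply, hij.ne']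

end BorelMove

theorem exists_borelMove_of_toLex_lt {n : ℕ} {c : Fin n → ℕ} {v w : Fin n →₀ ℕ}
    (hv : ∀ i, v i ≤ c i) (hw : ∀ i, w i ≤ c i) (hdeg : v.degree = w.degree)
    (hlt : toLex w < toLex v) :
    ∃ t, w t < v t ∧ ∃ w', BorelMove w w' ∧ (∀ i, w' i ≤ c i) ∧
      w' ≤ w + Finsupp.single t 1 := by
  obtain ⟨t, hagree, ht⟩ := Finsupp.lex_def.mp hlt
  simp only [ofLex_toLex] at hagree ht
  obtain ⟨s, hts, hws⟩ := Finsupp.exists_gt_ne_zero_of_degree_le hagree ht hdeg.le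
  refine ⟨t, ht, _, ⟨t, s, hts, hws, rfl⟩, fun i => ?_, fun i => ?_⟩
  · have := hv t
    have := hw i
    rw [Finsupp.tsub_single_add_single_apply]
    split_ifs with hsi hti hti
    · exact absurd (hsi.trans hti.symm) hts.ne'
    · omega
    · subst hti; omega
    · omega
  · simp only [Finsupp.add_apply, Finsupp.tsub_apply, Finsupp.single_apply]
    split_ifs <;> omega

/-- The exponents of the minimal monomial generators of `B^c(u)`. -/
def boundedBorelSet {n : ℕ} (c : Fin n → ℕ) (u : Fin n →₀ ℕ) : Set (Fin n →₀ ℕ) :=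
  {v | Relation.ReflTransGen (fun x y => BorelMove x y ∧ ∀ i, y i ≤ c i) u v}

namespace boundedBorelSet

variable {n : ℕ} {c : Fin n → ℕ} {u v : Fin n →₀ ℕ}

theorem le_of_mem (hu : ∀ i, u i ≤ c i) (hv : v ∈ boundedBorelSet c u) : ∀ i, v i ≤ c i := by
  induction hv with
  | refl => exact hu
  | tail _ h _ => exact h.2

theorem degree_eq_of_mem (hv : v ∈ boundedBorelSet c u) : v.degree = u.degree := by
  induction hv with
  | refl => rfl
  | tail _ h ih => rw [h.1.degree_eq, ih]

theorem finite (hu : ∀ i, u i ≤ c i) : (boundedBorelSet c u).Finite :=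
  (Set.finite_Iic (Finsupp.equivFunOnFinite.symm c)).subset fun _ hv => le_of_mem hu hv

theorem exists_le_add_single_of_toLex_lt (hu : ∀ i, u i ≤ c i) {w : Fin n →₀ ℕ}
    (hv : v ∈ boundedBorelSet c u) (hw : w ∈ boundedBorelSet c u) (hlt : toLex w < toLex v) :
    ∃ t, w t < v t ∧ ∃ w' ∈ boundedBorelSet c u, toLex w < toLex w' ∧
      w' ≤ w + Finsupp.single t 1 := by
  obtain ⟨t, ht, w', hmove, hw'c, hle⟩ := exists_borelMove_of_toLex_lt (le_of_mem hu hv)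
    (le_of_mem hu hw) ((degree_eq_of_mem hv).trans (degree_eq_of_mem hw).symm) hlt
  exact ⟨t, ht, w', hw.tail ⟨hmove, hw'c⟩, hmove.toLex_lt, hle⟩

end boundedBorelSet

/-- for any `c`-bounded monomial `u`, the `c`-bounded strongly stable principal ideal
`B^c(u)` (whose minimal monomial generators are exactly the monomials reachable from `u` by chains
of Borel moves with all intermediate monomials `c`-bounded) has linear quotients with respect to a
suitable ordering `w_1, …, w_m` of its minimal monomial generators. -/
theorem stmt_4 {K : Type*} [Field K] {n : ℕ} (c : Fin n → ℕ) (u : Fin n →₀ ℕ)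
    (hu : ∀ i, u i ≤ c i) :
    ∃ (m : ℕ) (w : Fin m → (Fin n →₀ ℕ)), Function.Injective w ∧
      (Set.range w =
        {v | Relation.ReflTransGen (fun x y => BorelMove x y ∧ ∀ i, y i ≤ c i) u v}) ∧
      ∀ j : Fin m, ∃ T : Set (Fin n),
        Submodule.colon
          (Ideal.span {p : MvPolynomial (Fin n) K | ∃ i, i < j ∧ p = monomial (w i) 1})
          (Ideal.span {(monomial (w j) (1 : K))})
        = Ideal.span (MvPolynomial.X '' T) := by
  classical
  obtain ⟨f, hf, hrange⟩ :=
    ((boundedBorelSet.finite hu).toFinset.image toLex).exists_strictAnti_enum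
  set w := fun i => ofLex (f i)
  have hw : Set.range w = boundedBorelSet c u := by
    simp [w, Set.range_comp', hrange, Set.image_image]
  refine ⟨_, w, fun i j h => hf.injective h, hw, fun j => ?_⟩
  have hgens : {p : MvPolynomial (Fin n) K | ∃ i, i < j ∧ p = monomial (w i) 1} =
      (fun s => monomial s 1) '' (w '' Set.Iio j) := by
    ext; simp [eq_comm]
  rw [hgens]
  refine ⟨_, MvPolynomial.colon_span_monomial_eq_span_X _ _ ?_⟩
  rintro _ ⟨i, hij, rfl⟩
  obtain ⟨t, ht, w', hw'B, hlt, hle⟩ := boundedBorelSet.exists_le_add_single_of_toLex_lt hu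
    (hw ▸ Set.mem_range_self i) (hw ▸ Set.mem_range_self j) (hf hij)
  obtain ⟨k, rfl⟩ := hw.symm ▸ hw'B
  exact ⟨t, ht, w k, ⟨k, hf.lt_iff_gt.mp hlt, rfl⟩, hle⟩
end

section
/- Let c = (c_1,…,c_n) be a vector of non-negative integers and d, ℓ ≥ 1 integers. For a monomial v ∈ S the following are equivalent: (i) v is c-bounded of degree d + ℓ and |supp(v)| > ℓ; (ii) there exist u ∈ G(I_{c,n,d}) and F ⊆ {1,…,n} with |F| = ℓ and max(F) < m(u) such that v = x_F·u and v is c-bounded. Consequently (I_{c,n,d+ℓ})_{>ℓ} = ( x_F·u : u ∈ G(I_{c,n,d}), F ⊆ {1,…,n}, |F| = ℓ, max(F) < m(u), x_F·u c-bounded ). (The right-hand ideal is the ℓ-th homological shift ideal HS_ℓ(I_{c,n,d}).) -/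
open MvPolynomial

/-! Writing `1_F = ∑ i ∈ F, single i 1`, a `c`-bounded `v` of degree `d + ℓ` with more than `ℓ`
variables splits as `v = u + 1_F` by taking for `F` any `ℓ` variables of `v` other than its largest
one `m`: then `u = v - 1_F` still contains `m`, so `max F < m ≤ m(u)`. Conversely, if
`max F < m(u)`, then `F` together with `m(u)` lies in the support of `u + 1_F`. -/

open Finset

lemma Finset.max_lt_coe_of_forall_lt {α : Type*} [LinearOrder α] {s : Finset α} {m : α}
    (h : ∀ a ∈ s, a < m) : s.max < m := by
  cases hmax : s.max with
  | bot => exact WithBot.bot_lt_coe m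
  | coe a => exact WithBot.coe_lt_coe.mpr (h a (mem_of_max hmax))

namespace Finsupp

variable {α : Type*}

lemma finset_sum_single_one_apply [DecidableEq α] (F : Finset α) (a : α) :
    (∑ i ∈ F, single i 1 : α →₀ ℕ) a = if a ∈ F then 1 else 0 := by
  simp [finsetSum_apply, single_apply]

lemma sum_univ_add_finset_sum_single_one [Fintype α] (u : α →₀ ℕ) (F : Finset α) :
    ∑ a, (u + ∑ i ∈ F, single i 1 : α →₀ ℕ) a = ∑ a, u a + #F := by
  classical
  simp only [add_apply, sum_add_distrib, finset_sum_single_one_apply, sum_boole, filter_univ_mem,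
    Nat.cast_id]

variable [LinearOrder α]

lemma exists_eq_add_finset_sum_single_one {ℓ : ℕ} {v : α →₀ ℕ} (h : ℓ < #v.support) :
    ∃ (u : α →₀ ℕ) (F : Finset α),
      #F = ℓ ∧ F.max < u.support.max ∧ v = u + ∑ i ∈ F, single i 1 := by
  have hne : v.support.Nonempty := card_pos.mp (by omega)
  set m := v.support.max' hne
  obtain ⟨F, hFsub, hFcard⟩ :
      ∃ F ⊆ v.support.erase m, #F = ℓ := exists_subset_card_eq <| by
    rw [card_erase_of_mem (max'_mem _ _)]
    omega
  have hmF : m ∉ F := fun hm => (ne_of_mem_erase (hFsub hm)) rfl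
  have hle : ∑ i ∈ F, single i 1 ≤ v := fun a => by
    rw [finset_sum_single_one_apply]
    split_ifs with ha
    · exact Nat.one_le_iff_ne_zero.mpr (mem_support_iff.mp (mem_of_mem_erase (hFsub ha)))
    · exact Nat.zero_le _
  refine ⟨v - ∑ i ∈ F, single i 1, F, hFcard, ?_, (tsub_add_cancel_of_le hle).symm⟩
  have hmu : m ∈ (v - ∑ i ∈ F, single i 1).support := by
    rw [mem_support_iff, tsub_apply, finset_sum_single_one_apply, if_neg hmF, Nat.sub_zero]
    exact mem_support_iff.mp (max'_mem _ _)
  exact (max_lt_coe_of_forall_lt fun a ha => lt_max'_of_mem_erase_max' _ hne (hFsub ha)).trans_le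
    (le_max hmu)

lemma lt_card_support_add_finset_sum_single_one {u : α →₀ ℕ} {F : Finset α}
    (h : F.max < u.support.max) : #F < #(u + ∑ i ∈ F, single i 1).support := by
  obtain ⟨m, hm⟩ := WithBot.ne_bot_iff_exists.mp (ne_bot_of_gt h)
  have hmF : m ∉ F := notMem_of_max_lt_coe (hm ▸ h)
  have hsub : insert m F ⊆ (u + ∑ i ∈ F, single i 1).support := by
    intro a ha
    rw [mem_support_iff, add_apply, finset_sum_single_one_apply]
    rcases mem_insert.mp ha with rfl | haF
    · exact fun h0 => mem_support_iff.mp (mem_of_max hm.symm) (Nat.eq_zero_of_add_eq_zero_right h0)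
    · simp [haF]
  calc #F < #(insert m F) := by rw [card_insert_of_notMem hmF]; omega
    _ ≤ _ := card_le_card hsub

theorem bounded_degree_add_lt_card_support_iff [Fintype α] (c : α → ℕ) (d ℓ : ℕ) (v : α →₀ ℕ) :
    ((∀ i, v i ≤ c i) ∧ ∑ i, v i = d + ℓ ∧ ℓ < #v.support) ↔
      ∃ (u : α →₀ ℕ) (F : Finset α),
        ∑ i, u i = d ∧ (∀ i, u i ≤ c i) ∧ #F = ℓ ∧ F.max < u.support.max ∧
        v = u + ∑ i ∈ F, single i 1 ∧ ∀ i, v i ≤ c i := by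
  constructor
  · rintro ⟨hvc, hdeg, hsupp⟩
    obtain ⟨u, F, hFcard, hmax, rfl⟩ := exists_eq_add_finset_sum_single_one hsupp
    refine ⟨u, F, ?_, fun i => le_trans (by simp) (hvc i), hFcard, hmax, rfl, hvc⟩
    rw [sum_univ_add_finset_sum_single_one] at hdeg
    omega
  · rintro ⟨u, F, hdeg, -, rfl, hmax, rfl, hvc⟩
    exact ⟨hvc, by rw [sum_univ_add_finset_sum_single_one, hdeg],
      lt_card_support_add_finset_sum_single_one hmax⟩

end Finsupp

theorem stmt_5_general {K : Type*} [Field K] {n : ℕ} (c : Fin n → ℕ) (d ℓ : ℕ) :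
    (∀ v : Fin n →₀ ℕ,
      ((∀ i, v i ≤ c i) ∧ (∑ i, v i) = d + ℓ ∧ ℓ < v.support.card) ↔
      (∃ (u : Fin n →₀ ℕ) (F : Finset (Fin n)),
        (∑ i, u i) = d ∧ (∀ i, u i ≤ c i) ∧ F.card = ℓ ∧ F.max < u.support.max ∧
        v = u + ∑ i ∈ F, Finsupp.single i 1 ∧ (∀ i, v i ≤ c i))) ∧
    (Ideal.span {p : MvPolynomial (Fin n) K | ∃ v : Fin n →₀ ℕ,
        (∀ i, v i ≤ c i) ∧ (∑ i, v i) = d + ℓ ∧ ℓ < v.support.card ∧ p = monomial v 1} =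
     Ideal.span {p : MvPolynomial (Fin n) K | ∃ (u : Fin n →₀ ℕ) (F : Finset (Fin n)),
        (∑ i, u i) = d ∧ (∀ i, u i ≤ c i) ∧ F.card = ℓ ∧ F.max < u.support.max ∧
        (∀ i, (u + ∑ k ∈ F, Finsupp.single k 1 : Fin n →₀ ℕ) i ≤ c i) ∧
        p = monomial (u + ∑ k ∈ F, Finsupp.single k 1) 1}) := by
  have hiff := Finsupp.bounded_degree_add_lt_card_support_iff c d ℓ
  refine ⟨hiff, congrArg Ideal.span (Set.ext fun p => ⟨?_, ?_⟩)⟩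
  · rintro ⟨v, hvc, hvdeg, hsupp, rfl⟩
    obtain ⟨u, F, hdeg, hu, hFcard, hmax, rfl, hvc⟩ := (hiff v).mp ⟨hvc, hvdeg, hsupp⟩
    exact ⟨u, F, hdeg, hu, hFcard, hmax, hvc, rfl⟩
  · rintro ⟨u, F, hdeg, hu, hFcard, hmax, hvc, rfl⟩
    obtain ⟨hvc, hvdeg, hsupp⟩ := (hiff _).mpr ⟨u, F, hdeg, hu, hFcard, hmax, rfl, hvc⟩
    exact ⟨_, hvc, hvdeg, hsupp, rfl⟩

/-- for `d, ℓ ≥ 1`, a monomial `v` is `c`-bounded of degree `d + ℓ` with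
`|supp(v)| > ℓ` iff `v = x_F · u` is `c`-bounded for some `u ∈ G(I_{c,n,d})` (i.e. a `c`-bounded
monomial of degree `d`) and some `F ⊆ {1,…,n}` with `|F| = ℓ` and `max F < m(u)`; consequently
`(I_{c,n,d+ℓ})_{>ℓ}` equals the ideal generated by all such `x_F · u`, which is `HS_ℓ(I_{c,n,d})`. -/
theorem stmt_5 {K : Type*} [Field K] {n : ℕ} (c : Fin n → ℕ) (d ℓ : ℕ)
    (hd : 1 ≤ d) (hl : 1 ≤ ℓ) :
    (∀ v : Fin n →₀ ℕ,
      ((∀ i, v i ≤ c i) ∧ (∑ i, v i) = d + ℓ ∧ ℓ < v.support.card) ↔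
      (∃ (u : Fin n →₀ ℕ) (F : Finset (Fin n)),
        (∑ i, u i) = d ∧ (∀ i, u i ≤ c i) ∧ F.card = ℓ ∧ F.max < u.support.max ∧
        v = u + ∑ i ∈ F, Finsupp.single i 1 ∧ (∀ i, v i ≤ c i))) ∧
    (Ideal.span {p : MvPolynomial (Fin n) K | ∃ v : Fin n →₀ ℕ,
        (∀ i, v i ≤ c i) ∧ (∑ i, v i) = d + ℓ ∧ ℓ < v.support.card ∧ p = monomial v 1} =
     Ideal.span {p : MvPolynomial (Fin n) K | ∃ (u : Fin n →₀ ℕ) (F : Finset (Fin n)),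
        (∑ i, u i) = d ∧ (∀ i, u i ≤ c i) ∧ F.card = ℓ ∧ F.max < u.support.max ∧
        (∀ i, (u + ∑ k ∈ F, Finsupp.single k 1 : Fin n →₀ ℕ) i ≤ c i) ∧
        p = monomial (u + ∑ k ∈ F, Finsupp.single k 1) 1}) :=
  stmt_5_general c d ℓ
end

section
/- Let I ⊆ S be a polymatroidal ideal satisfying the strong exchange property, and let ℓ ≥ 0 be an integer. Then the ideal I_{>ℓ}, generated by those u ∈ G(I) whose support has more than ℓ elements, is again polymatroidal. -/
/-! Write `u = x^a`, `v = x^b`. By strong exchange, `x_j u / x_i ∈ G(I)` for every `j` with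
`a_j < b_j`, so it suffices to choose such a `j` for which the support does not drop to `ℓ`.
If some such `j` has `a_j = 0`, the exchange loses at most `i` from `supp u` and gains `j`.
Otherwise `supp v ⊆ supp u`: when `a_i ≥ 2` all of `supp u` survives the exchange, and when
`a_i = 1` we have `b_i = 0`, so `supp v ⊆ supp u \ {i}` survives. -/

open Finsupp

namespace Finsupp

variable {α : Type*} (a : α →₀ ℕ) {i j : α}

lemma le_sub_single_add_single_apply {k : α} (hk : k ≠ i) :
    a k ≤ (a - single i 1 + single j 1 : α →₀ ℕ) k := by
  simp [hk.symm]

lemma sub_single_add_single_apply_right (hij : i ≠ j) :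
    (a - single i 1 + single j 1 : α →₀ ℕ) j = a j + 1 := by
  simp [hij]

lemma insert_erase_support_subset [DecidableEq α] (hij : i ≠ j) :
    insert j (a.support.erase i) ⊆ (a - single i 1 + single j 1).support := by
  intro k hk
  rw [mem_support_iff]
  rcases Finset.mem_insert.1 hk with rfl | hk
  · rw [sub_single_add_single_apply_right a hij]
    omega
  · obtain ⟨hki, hka⟩ := Finset.mem_erase.1 hk
    have hle := le_sub_single_add_single_apply a (j := j) hki
    have hak := mem_support_iff.1 hka
    omega

lemma support_subset_sub_single_add_single (hai : 2 ≤ a i) :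
    a.support ⊆ (a - single i 1 + single j 1).support := by
  classical
  intro k hk
  have hak := mem_support_iff.1 hk
  rw [mem_support_iff]
  simp only [add_apply, tsub_apply, single_apply]
  split_ifs <;> subst_vars <;> omega

end Finsupp

theorem stmt_7_general {n : ℕ} (A : Set (Fin n →₀ ℕ)) (ℓ : ℕ)
    (hpoly : ∀ a ∈ A, ∀ b ∈ A, ∀ i : Fin n, b i < a i →
      ∃ j : Fin n, a j < b j ∧ (a - Finsupp.single i 1 + Finsupp.single j 1) ∈ A)
    (hstrong : ∀ a ∈ A, ∀ b ∈ A, ∀ i j : Fin n, b i < a i → a j < b j →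
      (a - Finsupp.single i 1 + Finsupp.single j 1) ∈ A) :
    ∀ a ∈ A, ℓ < a.support.card → ∀ b ∈ A, ℓ < b.support.card →
      ∀ i : Fin n, b i < a i → ∃ j : Fin n, a j < b j ∧
        ((a - Finsupp.single i 1 + Finsupp.single j 1) ∈ A ∧
         ℓ < (a - Finsupp.single i 1 + Finsupp.single j 1 : Fin n →₀ ℕ).support.card) := by
  intro a ha hca b hb hcb i hbi
  have hia : i ∈ a.support := mem_support_iff.2 (by omega)
  suffices ∃ j, a j < b j ∧ ℓ < (a - single i 1 + single j 1).support.card by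
    obtain ⟨j, hj, hcard⟩ := this
    exact ⟨j, hj, hstrong a ha b hb i j hbi hj, hcard⟩
  by_cases hnew : ∃ j, a j < b j ∧ a j = 0
  · obtain ⟨j, hj, haj⟩ := hnew
    have hij : i ≠ j := by rintro rfl; omega
    refine ⟨j, hj, hca.trans_le ?_⟩
    calc a.support.card = (insert j (a.support.erase i)).card := by
          rw [Finset.card_insert_of_notMem (by simp [haj]), Finset.card_erase_add_one hia]
      _ ≤ _ := Finset.card_le_card (insert_erase_support_subset a hij)
  · push Not at hnew
    obtain ⟨j, hj, -⟩ := hpoly a ha b hb i hbi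
    have hij : i ≠ j := by rintro rfl; omega
    refine ⟨j, hj, ?_⟩
    by_cases hai : 2 ≤ a i
    · exact hca.trans_le (Finset.card_le_card (support_subset_sub_single_add_single a hai))
    · have hb_sub : b.support ⊆ a.support.erase i := by
        intro k hk
        have hbk := mem_support_iff.1 hk
        refine Finset.mem_erase.2 ⟨by rintro rfl; omega, mem_support_iff.2 fun hak => ?_⟩
        exact hbk (by have := hnew k; omega)
      exact hcb.trans_le <| Finset.card_le_card <|
        hb_sub.trans ((Finset.subset_insert _ _).trans (insert_erase_support_subset a hij))

/-- let `A` be the set of (exponent vectors of the) minimal monomial generators of a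
polymatroidal ideal generated in the single degree `d` which satisfies the strong exchange
property. Then for every `ℓ ≥ 0` the set of those elements of `A` whose support has more than `ℓ`
elements (the generators of `I_{>ℓ}`) again satisfies the polymatroidal exchange property. -/
theorem stmt_7 {n : ℕ} (d : ℕ) (A : Set (Fin n →₀ ℕ)) (ℓ : ℕ)
    (hdeg : ∀ a ∈ A, (∑ i, a i) = d)
    (hpoly : ∀ a ∈ A, ∀ b ∈ A, ∀ i : Fin n, b i < a i →
      ∃ j : Fin n, a j < b j ∧ (a - Finsupp.single i 1 + Finsupp.single j 1) ∈ A)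
    (hstrong : ∀ a ∈ A, ∀ b ∈ A, ∀ i j : Fin n, b i < a i → a j < b j →
      (a - Finsupp.single i 1 + Finsupp.single j 1) ∈ A) :
    ∀ a ∈ A, ℓ < a.support.card → ∀ b ∈ A, ℓ < b.support.card →
      ∀ i : Fin n, b i < a i → ∃ j : Fin n, a j < b j ∧
        ((a - Finsupp.single i 1 + Finsupp.single j 1) ∈ A ∧
         ℓ < (a - Finsupp.single i 1 + Finsupp.single j 1 : Fin n →₀ ℕ).support.card) :=
  stmt_7_general A ℓ hpoly hstrong
end

section
/- Let G be a finite simple graph on vertex set {1,…,n} such that 1,2,…,n is a perfect elimination ordering of G (for every i, the set { j > i : {i,j} ∈ E(G) } is a clique of G), and let I = I(G^c). Then for every generator x_i x_j ∈ G(I) with i < j, the colon ideal ( v ∈ G(I) : v >_lex x_i x_j ) : x_i x_j equals the ideal generated by the variables x_l with l ∈ {1,2,…,i−1} ∪ { k : i < k < j and {i,k} ∉ E(G) }; in particular set(x_i x_j) = {1,…,i−1} ∪ { k : i < k < j, {i,k} ∉ E(G) }. -/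
open MvPolynomial

/-! The colon of a monomial ideal by a monomial `x^a` is generated by the `x^(s - a)`, so membership
is tested monomial by monomial: `x^c` lies in the colon iff some generator `x^s` divides `x^(c + a)`.
For `a = e_i + e_j` a lex-earlier generator `x_k x_l` divides `x^c x_i x_j` iff `x^c` contains `x_k`
(when `k < i`) or `x_l` (when `k = i < l < j`). Conversely, for `t < i` either `x_t x_i` is a
generator or `t` is adjacent to `i`, and then the perfect elimination ordering forces `x_t x_j` to be
one, since `i` and `j` are not adjacent. -/

theorem MvPolynomial.mem_colon_span_monomial_image {σ R : Type*} [CommSemiring R]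
    {S : Set (σ →₀ ℕ)} {a : σ →₀ ℕ} {f : MvPolynomial σ R} :
    f ∈ (Ideal.span ((fun s => monomial s (1 : R)) '' S)).colon (Ideal.span {monomial a (1 : R)}) ↔
      ∀ c ∈ f.support, ∃ s ∈ S, s ≤ c + a := by
  rw [← Ideal.submodule_span_eq, Submodule.mem_colon_span_singleton, smul_eq_mul,
    mem_ideal_span_monomial_image]
  constructor
  · intro h c hc
    refine h (c + a) ?_
    rw [mem_support_iff, coeff_mul_monomial, mul_one]
    exact mem_support_iff.mp hc
  · intro h d hd
    rw [mem_support_iff, coeff_mul_monomial'] at hd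
    split_ifs at hd with had
    · obtain ⟨s, hs, hle⟩ := h (d - a) (mem_support_iff.mpr (by simpa using hd))
      exact ⟨s, hs, by rwa [tsub_add_cancel_of_le had] at hle⟩
    · exact absurd rfl hd

namespace SimpleGraph

variable {n : ℕ} (G : SimpleGraph (Fin n)) (i j : Fin n)

def lexEarlierExponents : Set (Fin n →₀ ℕ) :=
  {s | ∃ k l : Fin n, k < l ∧ ¬ G.Adj k l ∧ (k < i ∨ (k = i ∧ l < j)) ∧
    s = Finsupp.single k 1 + Finsupp.single l 1}

def colonVariables : Set (Fin n) :=
  {l | l < i ∨ (i < l ∧ l < j ∧ ¬ G.Adj i l)}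

variable {G i j}

theorem exists_mem_colonVariables_of_le (hij : i < j) {c s : Fin n →₀ ℕ}
    (hs : s ∈ G.lexEarlierExponents i j) (hle : s ≤ c + (Finsupp.single i 1 + Finsupp.single j 1)) :
    ∃ t ∈ G.colonVariables i j, c t ≠ 0 := by
  obtain ⟨k, l, hkl, hadj, hk | ⟨rfl, hlj⟩, rfl⟩ := hs
  · refine ⟨k, Or.inl hk, ?_⟩
    have hle_k := hle k
    simp only [Finsupp.add_apply, Finsupp.single_eq_same, Finsupp.single_eq_of_ne' hkl.ne',
      Finsupp.single_eq_of_ne' hk.ne', Finsupp.single_eq_of_ne' (hk.trans hij).ne'] at hle_k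
    omega
  · refine ⟨l, Or.inr ⟨hkl, hlj, hadj⟩, ?_⟩
    have hle_l := hle l
    simp only [Finsupp.add_apply, Finsupp.single_eq_same, Finsupp.single_eq_of_ne' hkl.ne,
      Finsupp.single_eq_of_ne' hlj.ne'] at hle_l
    omega

theorem exists_lexEarlierExponents_le
    (peo : ∀ i j k : Fin n, i < j → i < k → G.Adj i j → G.Adj i k → j ≠ k → G.Adj j k)
    (hij : i < j) (hnadj : ¬ G.Adj i j) {c : Fin n →₀ ℕ} {t : Fin n}
    (ht : t ∈ G.colonVariables i j) (hct : c t ≠ 0) :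
    ∃ s ∈ G.lexEarlierExponents i j, s ≤ c + (Finsupp.single i 1 + Finsupp.single j 1) := by
  have htc : Finsupp.single t 1 ≤ c := Finsupp.single_le_iff.mpr (Nat.one_le_iff_ne_zero.mpr hct)
  rcases ht with hti | ⟨hit, htj, hadj⟩
  · by_cases hadj : G.Adj t i
    · have hadj' : ¬ G.Adj t j := fun h => hnadj (peo t i j hti (hti.trans hij) hadj h hij.ne)
      exact ⟨_, ⟨t, j, hti.trans hij, hadj', Or.inl hti, rfl⟩, add_le_add htc le_add_self⟩
    · exact ⟨_, ⟨t, i, hti, hadj, Or.inl hti, rfl⟩, add_le_add htc le_self_add⟩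
  · refine ⟨_, ⟨i, t, hit, hadj, Or.inr ⟨rfl, htj⟩, rfl⟩, ?_⟩
    rw [add_comm (Finsupp.single i 1)]
    exact add_le_add htc le_self_add

end SimpleGraph

/-- if `1, 2, …, n` is a perfect elimination ordering of `G` and `I = I(G^c)`, then
for every generator `x_i x_j` of `I` (`i < j`, `{i,j} ∉ E(G)`) the colon ideal of the lex-earlier
generators by `x_i x_j` equals the ideal generated by the variables `x_l` with
`l ∈ {1,…,i−1} ∪ { k : i < k < j, {i,k} ∉ E(G) }`; in particular this set is `set(x_i x_j)`. -/
theorem stmt_9 {K : Type*} [Field K] {n : ℕ} (G : SimpleGraph (Fin n))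
    (peo : ∀ i j k : Fin n, i < j → i < k → G.Adj i j → G.Adj i k → j ≠ k → G.Adj j k) :
    ∀ i j : Fin n, i < j → ¬ G.Adj i j →
      Submodule.colon
        (Ideal.span {p : MvPolynomial (Fin n) K | ∃ k l : Fin n, k < l ∧ ¬ G.Adj k l ∧
          (k < i ∨ (k = i ∧ l < j)) ∧
          p = monomial (Finsupp.single k 1 + Finsupp.single l 1) 1})
        (Ideal.span {(monomial (Finsupp.single i 1 + Finsupp.single j 1) (1 : K))})
      = Ideal.span {q : MvPolynomial (Fin n) K | ∃ l : Fin n,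
          (l < i ∨ (i < l ∧ l < j ∧ ¬ G.Adj i l)) ∧ q = MvPolynomial.X l} := by
  intro i j hij hnadj
  have hgens : {p : MvPolynomial (Fin n) K | ∃ k l : Fin n, k < l ∧ ¬ G.Adj k l ∧
      (k < i ∨ (k = i ∧ l < j)) ∧ p = monomial (Finsupp.single k 1 + Finsupp.single l 1) 1} =
      (fun s => monomial s 1) '' G.lexEarlierExponents i j := by
    ext p; simp [SimpleGraph.lexEarlierExponents, and_assoc, @eq_comm _ _ p]
  have hvars : {q : MvPolynomial (Fin n) K | ∃ l : Fin n,
      (l < i ∨ (i < l ∧ l < j ∧ ¬ G.Adj i l)) ∧ q = X l} = X '' G.colonVariables i j := by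
    ext q; simp [SimpleGraph.colonVariables, @eq_comm _ _ q]
  ext f
  rw [hgens, hvars, mem_colon_span_monomial_image, mem_ideal_span_X_image]
  exact forall₂_congr fun c _ =>
    ⟨fun ⟨s, hs, hle⟩ => SimpleGraph.exists_mem_colonVariables_of_le hij hs hle,
      fun ⟨t, ht, hct⟩ => SimpleGraph.exists_lexEarlierExponents_le peo hij hnadj ht hct⟩
end

section
/- Let G be a finite simple graph on vertex set {1,…,n} such that 1,2,…,n is a perfect elimination ordering of G, let I = I(G^c), ordered by the lexicographic order induced by x_1 > … > x_n (an order of linear quotients), and let k ≥ 0. Then the ideal ( x_F·v : v ∈ G(I), F ⊆ set(v), |F| = k ) equals the ideal generated by all squarefree monomials x_{i_1} x_{i_2} ··· x_{i_{k+2}} with 1 ≤ i_1 < i_2 < … < i_{k+2} ≤ n for which there exists t < k+2 such that {i_t, i_ℓ} ∉ E(G) for all t < ℓ ≤ k+2. (The left-hand ideal is the k-th homological shift ideal HS_k(I(G^c)).) -/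
/-!
Under the perfect elimination ordering, `set(x_i x_j) = {l < i} ∪ {i < l < j : l ≁ i}`: a pair
`x_a x_b` lex-preceding `x_i x_j` and dividing `x_l x_i x_j` is `x_l x_i` or `x_l x_j`, and for
`l < i` with `l ∼ i` the elimination property forbids `l ∼ j`, so `x_l x_j` works.
Hence `x_F x_i x_j = x_T` with `T = F ∪ {i, j}` and `t = i` non-adjacent to every larger element
of `T`; conversely, from such `T` and `t` one recovers `i = t`, `j = max T`, `F = T \ {t, j}`.
-/

open MvPolynomial

theorem Finsupp.single_add_single_le_iff {σ : Type*} {a b : σ} (hab : a ≠ b)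
    (f : σ →₀ ℕ) : single a 1 + single b 1 ≤ f ↔ f a ≠ 0 ∧ f b ≠ 0 := by
  classical
  simp only [Finsupp.le_def, Finsupp.add_apply, Finsupp.single_apply]
  constructor
  · intro h
    have ha := h a
    have hb := h b
    simp only [if_pos, if_neg hab, if_neg hab.symm] at ha hb
    omega
  · rintro ⟨ha, hb⟩ x
    split_ifs <;> grind

theorem Finsupp.single_add_single_add_single_apply_ne_zero_iff {σ : Type*} (l i j x : σ) :
    (single l 1 + (single i 1 + single j 1) : σ →₀ ℕ) x ≠ 0 ↔
      x = l ∨ x = i ∨ x = j := by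
  classical
  simp only [Finsupp.add_apply, Finsupp.single_apply]
  grind

theorem Finset.sum_insert_insert_single {σ : Type*} [DecidableEq σ] {i j : σ} {F : Finset σ}
    (hi : i ∉ insert j F) (hj : j ∉ F) :
    ∑ l ∈ insert i (insert j F), Finsupp.single l (1 : ℕ) =
      Finsupp.single i 1 + Finsupp.single j 1 + ∑ l ∈ F, Finsupp.single l 1 := by
  rw [Finset.sum_insert hi, Finset.sum_insert hj, add_assoc]

namespace MvPolynomial

theorem X_mem_colon_span_monomial_iff {σ R : Type*} [CommSemiring R] [Nontrivial R]
    (S : Set (σ →₀ ℕ)) (d : σ →₀ ℕ) (l : σ) :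
    (X l : MvPolynomial σ R) ∈
        (Ideal.span ((fun s => monomial s (1 : R)) '' S)).colon
          (Ideal.span {monomial d (1 : R)}) ↔
      ∃ s ∈ S, s ≤ Finsupp.single l 1 + d := by
  classical
  rw [Ideal.mem_colon_span_singleton, X, monomial_mul, one_mul, mem_ideal_span_monomial_image,
    support_monomial, if_neg one_ne_zero]
  simp

end MvPolynomial

namespace SimpleGraph

variable {n : ℕ} (G : SimpleGraph (Fin n))

def lexSet (i j : Fin n) : Set (Fin n) :=
  {l | l < i ∨ (i < l ∧ l < j ∧ ¬ G.Adj i l)}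

variable {G}

theorem X_mem_colon_iff_exists_preceding_nonEdge {K : Type*} [Field K] (i j l : Fin n) :
    (X l : MvPolynomial (Fin n) K) ∈
        Submodule.colon
          (Ideal.span {q : MvPolynomial (Fin n) K | ∃ a b : Fin n, a < b ∧ ¬ G.Adj a b ∧
            (a < i ∨ (a = i ∧ b < j)) ∧
            q = monomial (Finsupp.single a 1 + Finsupp.single b 1) 1})
          (Ideal.span {(monomial (Finsupp.single i 1 + Finsupp.single j 1) (1 : K))}) ↔
      ∃ a b : Fin n, a < b ∧ ¬ G.Adj a b ∧ (a < i ∨ (a = i ∧ b < j)) ∧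
        (a = l ∨ a = i ∨ a = j) ∧ (b = l ∨ b = i ∨ b = j) := by
  have hgens : {q : MvPolynomial (Fin n) K | ∃ a b : Fin n, a < b ∧ ¬ G.Adj a b ∧
      (a < i ∨ (a = i ∧ b < j)) ∧ q = monomial (Finsupp.single a 1 + Finsupp.single b 1) 1} =
      (fun s => monomial s (1 : K)) '' {s | ∃ a b : Fin n, a < b ∧ ¬ G.Adj a b ∧
        (a < i ∨ (a = i ∧ b < j)) ∧ s = Finsupp.single a 1 + Finsupp.single b 1} := by
    ext q
    simp [eq_comm, and_assoc]
  have hdvd : ∀ a b : Fin n, a < b →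
      (Finsupp.single a 1 + Finsupp.single b 1 ≤
          Finsupp.single l 1 + (Finsupp.single i 1 + Finsupp.single j 1) ↔
        (a = l ∨ a = i ∨ a = j) ∧ (b = l ∨ b = i ∨ b = j)) := fun a b hab => by
    rw [Finsupp.single_add_single_le_iff hab.ne,
      Finsupp.single_add_single_add_single_apply_ne_zero_iff,
      Finsupp.single_add_single_add_single_apply_ne_zero_iff]
  rw [hgens, X_mem_colon_span_monomial_iff]
  constructor
  · rintro ⟨_, ⟨a, b, hab, hadj, hlex, rfl⟩, hle⟩
    exact ⟨a, b, hab, hadj, hlex, (hdvd a b hab).1 hle⟩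
  · rintro ⟨a, b, hab, hadj, hlex, hle⟩
    exact ⟨_, ⟨a, b, hab, hadj, hlex, rfl⟩, (hdvd a b hab).2 hle⟩

theorem exists_preceding_nonEdge_iff_mem_lexSet
    (peo : ∀ i j k : Fin n, i < j → i < k → G.Adj i j → G.Adj i k → j ≠ k → G.Adj j k)
    {i j : Fin n} (hij : i < j) (hnadj : ¬ G.Adj i j) (l : Fin n) :
    (∃ a b : Fin n, a < b ∧ ¬ G.Adj a b ∧ (a < i ∨ (a = i ∧ b < j)) ∧
        (a = l ∨ a = i ∨ a = j) ∧ (b = l ∨ b = i ∨ b = j)) ↔ l ∈ G.lexSet i j := by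
  constructor
  · rintro ⟨a, b, hab, hadj, hlex, ha, hb⟩
    simp only [lexSet, Set.mem_ofPred_eq]
    grind
  · rintro (hli | ⟨hil, hlj, hadj⟩)
    · by_cases hadj : G.Adj l i
      · refine ⟨l, j, hli.trans hij, fun hlj => hnadj ?_, Or.inl hli, Or.inl rfl,
          Or.inr (Or.inr rfl)⟩
        exact peo l i j hli (hli.trans hij) hadj hlj hij.ne
      · exact ⟨l, i, hli, hadj, Or.inl hli, Or.inl rfl, Or.inr (Or.inl rfl)⟩
    · exact ⟨i, l, hil, hadj, Or.inr ⟨rfl, hlj⟩, Or.inr (Or.inl rfl), Or.inl rfl⟩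

theorem X_mem_colon_iff_mem_lexSet {K : Type*} [Field K]
    (peo : ∀ i j k : Fin n, i < j → i < k → G.Adj i j → G.Adj i k → j ≠ k → G.Adj j k)
    {i j : Fin n} (hij : i < j) (hnadj : ¬ G.Adj i j) (l : Fin n) :
    (X l : MvPolynomial (Fin n) K) ∈
        Submodule.colon
          (Ideal.span {q : MvPolynomial (Fin n) K | ∃ a b : Fin n, a < b ∧ ¬ G.Adj a b ∧
            (a < i ∨ (a = i ∧ b < j)) ∧
            q = monomial (Finsupp.single a 1 + Finsupp.single b 1) 1})
          (Ideal.span {(monomial (Finsupp.single i 1 + Finsupp.single j 1) (1 : K))}) ↔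
      l ∈ G.lexSet i j :=
  (X_mem_colon_iff_exists_preceding_nonEdge i j l).trans
    (exists_preceding_nonEdge_iff_mem_lexSet peo hij hnadj l)

theorem notMem_insert_of_subset_lexSet {i j : Fin n} (hij : i < j) {F : Finset (Fin n)}
    (hF : ↑F ⊆ G.lexSet i j) : i ∉ insert j F ∧ j ∉ F := by
  refine ⟨fun hi => ?_, fun hj => ?_⟩
  · rcases Finset.mem_insert.1 hi with h | h
    · exact hij.ne h
    · simpa [lexSet] using hF h
  · exact absurd (by simpa [lexSet] using hF hj) hij.asymm

theorem not_adj_of_mem_insert_insert {i j : Fin n} {F : Finset (Fin n)} (hnadj : ¬ G.Adj i j)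
    (hF : ↑F ⊆ G.lexSet i j) : ∀ l ∈ insert i (insert j F), i < l → ¬ G.Adj i l := by
  simp only [Finset.mem_insert]
  rintro l (rfl | rfl | hl) hil
  · exact absurd hil (lt_irrefl _)
  · exact hnadj
  · exact ((hF hl).resolve_left (not_lt.2 hil.le)).2.2

theorem exists_eq_insert_insert_of_not_adj {T : Finset (Fin n)} {t l : Fin n} (htT : t ∈ T)
    (hlT : l ∈ T) (htl : t < l) (htail : ∀ l ∈ T, t < l → ¬ G.Adj t l) :
    ∃ j F, t < j ∧ ¬ G.Adj t j ∧ ↑F ⊆ G.lexSet t j ∧ T = insert t (insert j F) := by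
  set j := T.max' ⟨t, htT⟩
  have hjT : j ∈ T := T.max'_mem _
  have htj : t < j := htl.trans_le (T.le_max' l hlT)
  refine ⟨j, (T.erase t).erase j, htj, htail j hjT htj, ?_, ?_⟩
  · intro m hm
    simp only [Finset.coe_erase, Set.mem_sdiff, Finset.mem_coe, Set.mem_singleton_iff] at hm
    obtain ⟨⟨hmT, hmt⟩, hmj⟩ := hm
    have hmj' : m < j := (T.le_max' m hmT).lt_of_ne hmj
    rcases lt_or_gt_of_ne hmt with hmt' | htm
    · exact Or.inl hmt'
    · exact Or.inr ⟨htm, hmj', htail m hmT htm⟩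
  · rw [Finset.insert_erase (Finset.mem_erase.2 ⟨htj.ne', hjT⟩), Finset.insert_erase htT]

end SimpleGraph

open SimpleGraph

/-- let `1, …, n` be a perfect elimination ordering of `G` and `I = I(G^c)`, with
`G(I)` ordered by the lexicographic order induced by `x_1 > ⋯ > x_n` (an order of linear
quotients). Then the `k`-th homological shift ideal
`HS_k(I) = ( x_F v : v ∈ G(I), F ⊆ set(v), |F| = k )` equals the ideal generated by all squarefree
monomials `x_{i_1} ⋯ x_{i_{k+2}}`, `i_1 < ⋯ < i_{k+2}`, admitting `t < k+2` with
`{i_t, i_ℓ} ∉ E(G)` for all `t < ℓ ≤ k+2`. -/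
theorem stmt_10 {K : Type*} [Field K] {n : ℕ} (G : SimpleGraph (Fin n))
    (peo : ∀ i j k : Fin n, i < j → i < k → G.Adj i j → G.Adj i k → j ≠ k → G.Adj j k)
    (k : ℕ) :
    Ideal.span {p : MvPolynomial (Fin n) K | ∃ i j : Fin n, i < j ∧ ¬ G.Adj i j ∧
      ∃ F : Finset (Fin n), F.card = k ∧
        (∀ l ∈ F, MvPolynomial.X l ∈
          Submodule.colon
            (Ideal.span {q : MvPolynomial (Fin n) K | ∃ a b : Fin n, a < b ∧ ¬ G.Adj a b ∧
              (a < i ∨ (a = i ∧ b < j)) ∧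
              q = monomial (Finsupp.single a 1 + Finsupp.single b 1) 1})
            (Ideal.span {(monomial (Finsupp.single i 1 + Finsupp.single j 1) (1 : K))})) ∧
        p = monomial (Finsupp.single i 1 + Finsupp.single j 1 + ∑ l ∈ F, Finsupp.single l 1) 1}
    =
    Ideal.span {p : MvPolynomial (Fin n) K | ∃ T : Finset (Fin n), T.card = k + 2 ∧
      (∃ t ∈ T, (∃ l ∈ T, t < l) ∧ ∀ l ∈ T, t < l → ¬ G.Adj t l) ∧
      p = monomial (∑ l ∈ T, Finsupp.single l 1) 1} := by
  congr 1
  ext p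
  constructor
  · rintro ⟨i, j, hij, hnadj, F, rfl, hF, rfl⟩
    replace hF : ↑F ⊆ G.lexSet i j := fun l hl =>
      (X_mem_colon_iff_mem_lexSet peo hij hnadj l).1 (hF l hl)
    obtain ⟨hi, hj⟩ := notMem_insert_of_subset_lexSet hij hF
    refine ⟨insert i (insert j F), ?_, ⟨i, Finset.mem_insert_self _ _, ⟨j, by simp, hij⟩,
      not_adj_of_mem_insert_insert hnadj hF⟩, by rw [Finset.sum_insert_insert_single hi hj]⟩
    rw [Finset.card_insert_of_notMem hi, Finset.card_insert_of_notMem hj]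
  · rintro ⟨T, hcard, ⟨t, htT, ⟨l, hlT, htl⟩, htail⟩, rfl⟩
    obtain ⟨j, F, htj, hnadj, hF, rfl⟩ := exists_eq_insert_insert_of_not_adj htT hlT htl htail
    obtain ⟨ht, hj⟩ := notMem_insert_of_subset_lexSet htj hF
    rw [Finset.card_insert_of_notMem ht, Finset.card_insert_of_notMem hj] at hcard
    exact ⟨t, j, htj, hnadj, F, by omega,
      fun l hl => (X_mem_colon_iff_mem_lexSet peo htj hnadj l).2 (hF hl),
      by rw [Finset.sum_insert_insert_single ht hj]⟩
end

section
/- Let G be a finite simple graph on {1,…,n} that is a proper interval graph with respect to the natural order: whenever i < j and {i,j} ∈ E(G), the set {i, i+1, …, j} is a clique of G. Suppose the maximal cliques of G are exactly the intervals L_q = {a_q, a_q+1, …, b_q} for q = 1,…,p, with p ≥ 2, a_1 = 1 < a_2 < … < a_p, b_1 < b_2 < … < b_p = n and a_{q+1} ≤ b_q + 1 for all q, and set s = min{ |L_q ∩ L_{q+1}| : 1 ≤ q ≤ p−1 } = min_q (b_q − a_{q+1} + 1). Then for an integer k ≥ 0 there exist indices 1 ≤ i_1 < i_2 < … < i_{k+2}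 ≤ n and t < k+2 with {i_t, i_ℓ} ∉ E(G) for all t < ℓ ≤ k+2 if and only if k ≤ n − s − 2. (Equivalently, HS_k(I(G^c)) ≠ (0) iff k ≤ n − s − 2; in particular projdim I(G^c) = n − s − 2.) -/
/-!
Two vertices `i < j` are adjacent exactly when some interval `[a q, b q]` contains both. If `t`
has no neighbour above it in `T`, let `q` be the last interval starting at or before `t`: every
element of `T` above `t` lies beyond `b q`, while `t < a (q+1)`, so `T` avoids the
`b q + 1 - a (q+1) ≥ s` vertices of `L_q ∩ L_{q+1}`. Conversely, when `q` attains `s`, no vertex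
below `a (q+1)` is adjacent to a vertex beyond `b q`, so any `k + 2` vertices outside
`L_q ∩ L_{q+1}` containing `a (q+1) - 1` and `b q + 1` will do.
-/

open Finset

namespace SimpleGraph

variable {V : Type*} {G : SimpleGraph V}

def HasMaximalCliques {ι : Type*} (G : SimpleGraph V) (L : ι → Set V) : Prop :=
  ∀ C : Set V, (G.IsClique C ∧ ∀ D : Set V, G.IsClique D → C ⊆ D → D = C) ↔ ∃ i, C = L i

theorem adj_iff_exists_mem_of_hasMaximalCliques [Finite V] {ι : Type*} {L : ι → Set V}
    (hL : G.HasMaximalCliques L) {u v : V} : G.Adj u v ↔ u ≠ v ∧ ∃ i, u ∈ L i ∧ v ∈ L i := by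
  constructor
  · intro huv
    obtain ⟨M, hsub, hM⟩ := Finite.exists_le_maximal (isClique_pair.mpr fun _ => huv)
    obtain ⟨i, rfl⟩ := (hL M).mp ⟨hM.1, fun D hD hMD => (hM.2 hD hMD).antisymm hMD⟩
    exact ⟨huv.ne, i, hsub (by simp), hsub (by simp)⟩
  · rintro ⟨huv, i, hu, hv⟩
    exact ((hL (L i)).mpr ⟨i, rfl⟩).1 hu hv huv

end SimpleGraph

open SimpleGraph

section IntervalCliques

variable {n p : ℕ} {G : SimpleGraph (Fin n)} {a b : Fin p → Fin n}

theorem val_add_one_lt_iff_of_map_last (hn : 0 < n) (hp : 0 < p) (hbmono : StrictMono b)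
    (hbl : b ⟨p - 1, by omega⟩ = ⟨n - 1, by omega⟩) (q : Fin p) :
    (b q : ℕ) + 1 < n ↔ (q : ℕ) + 1 < p := by
  have hlast : (b ⟨p - 1, by omega⟩ : ℕ) = n - 1 := congrArg Fin.val hbl
  constructor
  · intro hq
    by_contra! hqp
    rw [show q = ⟨p - 1, by omega⟩ from Fin.ext (by simp; omega), hlast] at hq
    omega
  · intro hq
    have hq_lt : q < ⟨p - 1, by omega⟩ := Fin.lt_def.mpr (by simp; omega)
    have := Fin.lt_def.mp (hbmono hq_lt)
    omega

theorem not_adj_of_lt_start_of_end_lt (hG : G.HasMaximalCliques fun q => Set.Icc (a q) (b q))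
    (hamono : StrictMono a) (hbmono : StrictMono b) {q r : Fin p} (hqr : (q : ℕ) + 1 = r)
    {i j : Fin n} (hi : i < a r) (hj : b q < j) : ¬ G.Adj i j := by
  rw [adj_iff_exists_mem_of_hasMaximalCliques hG]
  rintro ⟨-, q', ⟨hi', -⟩, -, hj'⟩
  have hq'r : q' < r := hamono.lt_iff_lt.mp (hi'.trans_lt hi)
  have hq'q : q' ≤ q := Fin.le_def.mpr (by have := Fin.lt_def.mp hq'r; omega)
  exact (hj.trans_le hj').not_ge (hbmono.monotone hq'q)

theorem exists_gap_of_forall_not_adj (hG : G.HasMaximalCliques fun q => Set.Icc (a q) (b q))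
    (hn : 0 < n) (hp : 0 < p) (ha0 : a ⟨0, hp⟩ = ⟨0, hn⟩) (hbmono : StrictMono b)
    (hbl : b ⟨p - 1, by omega⟩ = ⟨n - 1, by omega⟩) {T : Finset (Fin n)} {t l : Fin n}
    (hl : l ∈ T) (htl : t < l) (hT : ∀ l ∈ T, t < l → ¬ G.Adj t l) :
    ∃ q r : Fin p, (q : ℕ) + 1 = r ∧ #T + ((b q : ℕ) + 1 - a r) ≤ n := by
  obtain ⟨q, hq, hmax⟩ := Set.exists_max_image {q | a q ≤ t} id (Set.toFinite _)
    ⟨⟨0, hp⟩, by rw [Set.mem_ofPred_eq, ha0]; exact Nat.zero_le _⟩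
  have habove : ∀ l ∈ T, t < l → b q < l := fun l hl htl => not_le.mp fun hlq =>
    hT l hl htl <| (adj_iff_exists_mem_of_hasMaximalCliques hG).mpr
      ⟨htl.ne, q, ⟨hq, htl.le.trans hlq⟩, hq.trans htl.le, hlq⟩
  have hqp : (q : ℕ) + 1 < p := (val_add_one_lt_iff_of_map_last hn hp hbmono hbl q).mp
    (by have := Fin.lt_def.mp (habove l hl htl); omega)
  refine ⟨q, ⟨q + 1, hqp⟩, rfl, ?_⟩
  have hta : t < a ⟨q + 1, hqp⟩ := not_le.mp fun h => by
    simpa [Fin.le_def] using hmax _ h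
  have hsub : T ⊆ Iic t ∪ Ioi (b q) := fun x hx => by
    rcases le_or_gt x t with h | h
    · exact mem_union_left _ (mem_Iic.mpr h)
    · exact mem_union_right _ (mem_Ioi.mpr (habove x hx h))
  have hcard := (card_le_card hsub).trans (card_union_le _ _)
  rw [Fin.card_Iic, Fin.card_Ioi] at hcard
  have := Fin.lt_def.mp hta
  have := (b q).isLt
  have := card_le_univ T
  rw [Fintype.card_fin] at this
  omega

theorem exists_forall_not_adj_of_gap (hG : G.HasMaximalCliques fun q => Set.Icc (a q) (b q))
    (hn : 0 < n) (hp : 0 < p) (hamono : StrictMono a) (hbmono : StrictMono b)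
    (hbl : b ⟨p - 1, by omega⟩ = ⟨n - 1, by omega⟩) {q r : Fin p} (hqr : (q : ℕ) + 1 = r)
    (hover : (a r : ℕ) ≤ (b q : ℕ) + 1) {k : ℕ} (hk : k ≤ n - ((b q : ℕ) + 1 - a r) - 2) :
    ∃ T : Finset (Fin n), #T = k + 2 ∧
      ∃ t ∈ T, (∃ l ∈ T, t < l) ∧ ∀ l ∈ T, t < l → ¬ G.Adj t l := by
  have hbq : (b q : ℕ) + 1 < n :=
    (val_add_one_lt_iff_of_map_last hn hp hbmono hbl q).mpr (by omega)
  have har : 0 < (a r : ℕ) :=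
    (Nat.zero_le _).trans_lt (hamono (show ⟨0, hp⟩ < r from Fin.lt_def.mpr (by simp; omega)))
  let t : Fin n := ⟨a r - 1, by omega⟩
  let l : Fin n := ⟨b q + 1, hbq⟩
  have hta : t < a r := Fin.lt_def.mpr (show (a r : ℕ) - 1 < a r by omega)
  have hlb : b q < l := Fin.lt_def.mpr (show (b q : ℕ) < b q + 1 by omega)
  have hpair : {t, l} ⊆ (Icc (a r) (b q))ᶜ := by
    simp only [insert_subset_iff, singleton_subset_iff, mem_compl, mem_Icc, not_and_or, not_le]
    exact ⟨.inl hta, .inr hlb⟩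
  have hcompl : #(Icc (a r) (b q))ᶜ = n - ((b q : ℕ) + 1 - a r) := by
    rw [card_compl, Fin.card_Icc, Fintype.card_fin]
  obtain ⟨T, hpairT, hTcompl, hT⟩ := exists_subsuperset_card_eq hpair
    (card_le_two.trans (by omega : 2 ≤ k + 2)) (by omega)
  have htl : t < l := Fin.lt_def.mpr (show (a r : ℕ) - 1 < b q + 1 by omega)
  refine ⟨T, hT, t, hpairT (by simp), ⟨l, hpairT (by simp), htl⟩,
    fun x hx htx => not_adj_of_lt_start_of_end_lt hG hamono hbmono hqr hta ?_⟩
  have hx := hTcompl hx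
  simp only [mem_compl, mem_Icc, not_and, not_le] at hx
  exact hx (Fin.le_def.mpr (by have : (a r : ℕ) - 1 < x := htx; omega))

end IntervalCliques

theorem stmt_13 {n p : ℕ} (hn : 0 < n) (hp : 2 ≤ p) (G : SimpleGraph (Fin n))
    (a b : Fin p → Fin n)
    (ha0 : a ⟨0, by omega⟩ = ⟨0, hn⟩)
    (hbl : b ⟨p - 1, by omega⟩ = ⟨n - 1, by omega⟩)
    (hamono : StrictMono a) (hbmono : StrictMono b)
    (hoverlap : ∀ q r : Fin p, (q : ℕ) + 1 = (r : ℕ) → (a r : ℕ) ≤ (b q : ℕ) + 1)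
    (hcliques : ∀ C : Set (Fin n),
      (G.IsClique C ∧ ∀ D : Set (Fin n), G.IsClique D → C ⊆ D → D = C) ↔
      (∃ q : Fin p, C = Set.Icc (a q) (b q)))
    (s : ℕ)
    (hs : IsLeast {m : ℕ | ∃ q r : Fin p, (q : ℕ) + 1 = (r : ℕ) ∧
      m = (b q : ℕ) + 1 - (a r : ℕ)} s)
    (k : ℕ) :
    (∃ T : Finset (Fin n), T.card = k + 2 ∧
      ∃ t ∈ T, (∃ l ∈ T, t < l) ∧ ∀ l ∈ T, t < l → ¬ G.Adj t l) ↔ k ≤ n - s - 2 := by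
  constructor
  · rintro ⟨T, hT, t, -, ⟨l, hl, htl⟩, hnadj⟩
    obtain ⟨q, r, hqr, hcard⟩ :=
      exists_gap_of_forall_not_adj hcliques hn (by omega) ha0 hbmono hbl hl htl hnadj
    have := hs.2 ⟨q, r, hqr, rfl⟩
    omega
  · intro hk
    obtain ⟨q, r, hqr, rfl⟩ := hs.1
    exact exists_forall_not_adj_of_gap hcliques hn (by omega) hamono hbmono hbl hqr
      (hoverlap q r hqr) hk
end

section
/- Let n and k be integers with 1 ≤ k ≤ n − 3, and let J_{n,k} ⊆ K[x_1,…,x_n] be the ideal generated by all squarefree monomials x_{i_1} ··· x_{i_{k+2}} with 1 ≤ i_1 < … < i_{k+2} ≤ n having some t < k+2 with i_{t+1} − i_t ≥ 2, with G(J_{n,k}) ordered by the lexicographic order induced by x_1 > … > x_n. Let u = x_{i_1} ··· x_{i_{k+2}} ∈ G(J_{n,k}), let t be the smallest index with i_{t+1} − i_t ≥ 2 (so 1 ≤ t ≤ k+1), and set A = {1,2,…,i_{k+2}} ∖ {i_1,…,i_{k+2}}. Then set(u) = A if t < k+1, and set(u) = A ∖ {i_{k+1} + 1} if t = k+1, where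 set(u) = { l : x_l ∈ ( v ∈ G(J_{n,k}) : v >_lex u ) : u }. -/
/-!
A lex-greater generator `v` with `v ∣ x_l u` has the same degree as `u`, so it is an exchange
`v = x_l u / x_j` with `l ∉ supp u` and `l < j ∈ supp u`; hence `l ∈ set(u)` iff some such
exchange still has a gap. If `l < i_{k+1}`, exchanging `j = i_{k+1}` leaves the hole `i_{k+1}`
between `l` and `i_{k+2}`. If `i_{k+1} < l < i_{k+2}`, only `j = i_{k+2}` is available, and
`x_{i_1} ⋯ x_{i_{k+1}} x_l` has a gap unless `i_1, …, i_{k+1}` is an interval (`t = k + 1`) and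
`l = i_{k+1} + 1`.
-/

open MvPolynomial

/-- `T = {i_1 < ⋯ < i_r}` has a gap: some consecutive pair of elements of `T` differs by ≥ 2. -/
def HasGap {n : ℕ} (T : Finset (Fin n)) : Prop :=
  ∃ a ∈ T, ∃ b ∈ T, (a : ℕ) + 2 ≤ (b : ℕ) ∧ ∀ x ∈ T, a < x → b ≤ x

/-- The exponent vector of the squarefree monomial `x_T = ∏_{i ∈ T} x_i`. -/
noncomputable def sqfree {n : ℕ} (T : Finset (Fin n)) : Fin n →₀ ℕ :=
  ∑ i ∈ T, Finsupp.single i 1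

/-- `a >_lex b` for the lexicographic order on monomials induced by `x_1 > x_2 > ⋯ > x_n`. -/
def lexGT {n : ℕ} (a b : Fin n →₀ ℕ) : Prop :=
  ∃ i : Fin n, (∀ j : Fin n, j < i → a j = b j) ∧ b i < a i

/-- `set(u)` for a generator `u` (with exponent vector `e`) of `J_{n,k}`, with respect to the
lexicographic order on the minimal generators of `J_{n,k}`: the set of indices `l` such that
`x_l` lies in the colon ideal of the lex-greater generators by `u`. -/
noncomputable def lqSet (K : Type*) [Field K] (n k : ℕ) (e : Fin n →₀ ℕ) : Set (Fin n) :=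
  {l : Fin n | MvPolynomial.X l ∈
    Submodule.colon
      (Ideal.span {p : MvPolynomial (Fin n) K | ∃ U : Finset (Fin n),
        U.card = k + 2 ∧ HasGap U ∧ lexGT (sqfree U) e ∧ p = monomial (sqfree U) 1})
      (Ideal.span {(monomial e (1 : K))})}

lemma sqfree_apply {n : ℕ} (T : Finset (Fin n)) (x : Fin n) :
    sqfree T x = if x ∈ T then 1 else 0 := by
  classical
  simp [sqfree, Finsupp.finsetSum_apply, Finsupp.single_apply]

lemma sqfree_le_single_add_sqfree_iff {n : ℕ} {U T : Finset (Fin n)} {l : Fin n} :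
    sqfree U ≤ Finsupp.single l 1 + sqfree T ↔ U ⊆ insert l T := by
  classical
  simp only [Finsupp.le_def, Finsupp.add_apply, Finsupp.single_apply, sqfree_apply,
    Finset.subset_iff, Finset.mem_insert]
  refine forall_congr' fun x => ?_
  by_cases hxU : x ∈ U <;> by_cases hxT : x ∈ T <;> by_cases hlx : l = x <;> simp [*, eq_comm]

lemma lexGT_irrefl {n : ℕ} (a : Fin n →₀ ℕ) : ¬ lexGT a a :=
  fun ⟨_, _, h⟩ => lt_irrefl _ h

lemma lexGT_sqfree_exchange_iff {n : ℕ} {T : Finset (Fin n)} {l j : Fin n} (hl : l ∉ T)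
    (hj : j ∈ T) : lexGT (sqfree (insert l (T.erase j))) (sqfree T) ↔ l < j := by
  classical
  have hlj : l ≠ j := fun h => hl (h ▸ hj)
  constructor
  · rintro ⟨p, hbelow, hp⟩
    have hpl : p = l := by
      by_contra hpl
      by_cases hpT : p ∈ T <;> by_cases hpj : p = j <;> simp_all [sqfree_apply]
    subst hpl
    refine lt_of_le_of_ne (not_lt.mp fun hjp => ?_) hlj
    simpa [sqfree_apply, hj, hlj.symm] using hbelow j hjp
  · intro hlj'
    refine ⟨l, fun x hx => ?_, by simp [sqfree_apply, hl]⟩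
    have hxj : x ≠ j := (hx.trans hlj').ne
    simp [sqfree_apply, hx.ne, hxj]

lemma mem_lqSet_iff {K : Type*} [Field K] {n k : ℕ} {e : Fin n →₀ ℕ} {l : Fin n} :
    l ∈ lqSet K n k e ↔ ∃ U : Finset (Fin n),
      U.card = k + 2 ∧ HasGap U ∧ lexGT (sqfree U) e ∧ sqfree U ≤ Finsupp.single l 1 + e := by
  classical
  have hgens : {p : MvPolynomial (Fin n) K | ∃ U : Finset (Fin n),
        U.card = k + 2 ∧ HasGap U ∧ lexGT (sqfree U) e ∧ p = monomial (sqfree U) 1} =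
      (fun s => monomial s (1 : K)) '' {s | ∃ U : Finset (Fin n),
        U.card = k + 2 ∧ HasGap U ∧ lexGT (sqfree U) e ∧ s = sqfree U} := by
    ext p
    constructor
    · rintro ⟨U, hU, hgap, hlex, rfl⟩
      exact ⟨_, ⟨U, hU, hgap, hlex, rfl⟩, rfl⟩
    · rintro ⟨_, ⟨U, hU, hgap, hlex, rfl⟩, rfl⟩
      exact ⟨U, hU, hgap, hlex, rfl⟩
  rw [lqSet, Set.mem_ofPred_eq, hgens, ← Ideal.submodule_span_eq, ← Ideal.submodule_span_eq,
    Submodule.mem_colon_span_singleton, Ideal.submodule_span_eq, smul_eq_mul, X, monomial_mul,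
    one_mul, mem_ideal_span_monomial_image, support_monomial, if_neg one_ne_zero]
  simp only [Finset.mem_singleton, forall_eq, Set.mem_ofPred_eq]
  constructor
  · rintro ⟨_, ⟨U, hU, hgap, hlex, rfl⟩, hle⟩
    exact ⟨U, hU, hgap, hlex, hle⟩
  · rintro ⟨U, hU, hgap, hlex, hle⟩
    exact ⟨_, ⟨U, hU, hgap, hlex, rfl⟩, hle⟩

lemma Finset.exists_eq_insert_erase_of_subset_insert {α : Type*} [DecidableEq α]
    {U T : Finset α} {l : α} (hU : U ⊆ insert l T) (hcard : U.card = T.card) (hne : U ≠ T) :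
    l ∉ T ∧ ∃ j ∈ T, U = insert l (T.erase j) := by
  have hlT : l ∉ T := fun hlT =>
    hne (Finset.eq_of_subset_of_card_le (Finset.insert_eq_of_mem hlT ▸ hU) hcard.ge)
  obtain ⟨j, hjU, hjUT⟩ := Finset.exists_eq_insert_iff.mpr
    ⟨hU, by rw [Finset.card_insert_of_notMem hlT, hcard]⟩
  have hjl : j ≠ l := by
    rintro rfl
    refine hne ?_
    rw [← Finset.erase_insert hjU, hjUT, Finset.erase_insert hlT]
  refine ⟨hlT, j, ?_, ?_⟩
  · have hj : j ∈ insert l T := hjUT ▸ Finset.mem_insert_self j U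
    simpa [hjl] using hj
  · rw [← Finset.erase_insert hjU, hjUT, Finset.erase_insert_of_ne hjl.symm]

lemma mem_lqSet_sqfree_iff {K : Type*} [Field K] {n k : ℕ} {T : Finset (Fin n)}
    (hT : T.card = k + 2) {l : Fin n} :
    l ∈ lqSet K n k (sqfree T) ↔ l ∉ T ∧ ∃ j ∈ T, l < j ∧ HasGap (insert l (T.erase j)) := by
  classical
  rw [mem_lqSet_iff]
  constructor
  · rintro ⟨U, hU, hgap, hlex, hle⟩
    have hne : U ≠ T := by rintro rfl; exact lexGT_irrefl _ hlex
    obtain ⟨hlT, j, hj, rfl⟩ := Finset.exists_eq_insert_erase_of_subset_insert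
      (sqfree_le_single_add_sqfree_iff.mp hle) (hU.trans hT.symm) hne
    exact ⟨hlT, j, hj, (lexGT_sqfree_exchange_iff hlT hj).mp hlex, hgap⟩
  · rintro ⟨hlT, j, hj, hlj, hgap⟩
    refine ⟨insert l (T.erase j), ?_, hgap, (lexGT_sqfree_exchange_iff hlT hj).mpr hlj,
      sqfree_le_single_add_sqfree_iff.mpr (Finset.insert_subset_insert l (T.erase_subset j))⟩
    rw [Finset.card_insert_of_notMem (fun h => hlT (Finset.mem_of_mem_erase h)),
      Finset.card_erase_of_mem hj, hT]
    rfl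

lemma hasGap_iff {n : ℕ} {U : Finset (Fin n)} :
    HasGap U ↔ ∃ a ∈ U, ∃ b ∈ U, ∃ x ∉ U, a < x ∧ x < b := by
  constructor
  · rintro ⟨a, ha, b, hb, hab, hnext⟩
    refine ⟨a, ha, b, hb, ⟨a + 1, by omega⟩, fun hx => ?_, Fin.lt_def.mpr (by simp),
      Fin.lt_def.mpr (by simp; omega)⟩
    have := Fin.le_def.mp (hnext _ hx (Fin.lt_def.mpr (by simp)))
    simp at this
    omega
  · rintro ⟨a, ha, b, hb, x, hx, hax, hxb⟩
    classical
    have hL : (U.filter (· < x)).Nonempty := ⟨a, Finset.mem_filter.mpr ⟨ha, hax⟩⟩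
    have hR : (U.filter (x < ·)).Nonempty := ⟨b, Finset.mem_filter.mpr ⟨hb, hxb⟩⟩
    obtain ⟨haU, hax'⟩ := Finset.mem_filter.mp (Finset.max'_mem _ hL)
    obtain ⟨hbU, hxb'⟩ := Finset.mem_filter.mp (Finset.min'_mem _ hR)
    refine ⟨_, haU, _, hbU, by rw [Fin.lt_def] at hax' hxb'; omega, fun y hy hay => ?_⟩
    rcases lt_trichotomy y x with hyx | rfl | hxy
    · exact absurd (Finset.le_max' _ y (Finset.mem_filter.mpr ⟨hy, hyx⟩)) (not_le.mpr hay)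
    · exact absurd hy hx
    · exact Finset.min'_le _ y (Finset.mem_filter.mpr ⟨hy, hxy⟩)

lemma hasGap_insert_of_max_lt_iff {n : ℕ} {S : Finset (Fin n)} {m l : Fin n} (hm : m ∈ S)
    (hS : ∀ s ∈ S, s ≤ m) (hml : m < l) :
    HasGap (insert l S) ↔ HasGap S ∨ (l : ℕ) ≠ m + 1 := by
  simp only [hasGap_iff, Finset.mem_insert, not_or]
  constructor
  · rintro ⟨a, ha, b, hb, x, ⟨hxl, hxS⟩, hax, hxb⟩
    by_contra h
    rw [not_or, not_not] at h
    obtain ⟨hgap, hlm⟩ := h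
    have haS : a ∈ S := ha.resolve_left fun hal => by
      rcases hb with rfl | hb
      · exact lt_asymm (hal ▸ hax) hxb
      · exact lt_irrefl _ ((hal ▸ hax).trans (hxb.trans_le ((hS b hb).trans hml.le)))
    rcases hb with rfl | hbS
    · have hxm : x < m := lt_of_le_of_ne (Fin.le_def.mpr (by rw [Fin.lt_def] at hxb; omega))
        fun h => hxS (h ▸ hm)
      exact hgap ⟨a, haS, m, hm, x, hxS, hax, hxm⟩
    · exact hgap ⟨a, haS, b, hbS, x, hxS, hax, hxb⟩
  · rintro (⟨a, ha, b, hb, x, hxS, hax, hxb⟩ | hlm)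
    · exact ⟨a, .inr ha, b, .inr hb, x,
        ⟨(hxb.trans_le ((hS b hb).trans hml.le)).ne, hxS⟩, hax, hxb⟩
    · have hml' := Fin.lt_def.mp hml
      refine ⟨m, .inr hm, l, .inl rfl, ⟨m + 1, by omega⟩, ⟨fun h => ?_, fun h => ?_⟩,
        Fin.lt_def.mpr (by simp), Fin.lt_def.mpr (by simp; omega)⟩
      · exact hlm (by rw [← h])
      · exact absurd (Fin.le_def.mp (hS _ h)) (by simp)

lemma exists_exchange_hasGap_iff {n : ℕ} {S : Finset (Fin n)} {m M l : Fin n} (hm : m ∈ S)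
    (hS : ∀ s ∈ S, s ≤ m) (hmM : m < M) (hl : l ∉ insert M S) :
    (∃ j ∈ insert M S, l < j ∧ HasGap (insert l ((insert M S).erase j))) ↔
      l < M ∧ (HasGap S ∨ (l : ℕ) ≠ m + 1) := by
  classical
  have hMS : M ∉ S := fun h => absurd (hS M h) (not_le.mpr hmM)
  have hlm : l ≠ m := fun h => hl (Finset.mem_insert_of_mem (h ▸ hm))
  constructor
  · rintro ⟨j, hj, hlj, hgap⟩
    have hjM : j ≤ M := (Finset.mem_insert.mp hj).elim le_of_eq fun h => (hS j h).trans hmM.le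
    refine ⟨hlj.trans_le hjM, ?_⟩
    rcases lt_or_gt_of_ne hlm with hlm | hml
    · exact .inr (by rw [Fin.lt_def] at hlm; omega)
    · have hjM : j = M := (Finset.mem_insert.mp hj).resolve_right
        fun h => absurd (hml.trans hlj) (not_lt.mpr (hS j h))
      rw [hjM, Finset.erase_insert hMS] at hgap
      exact (hasGap_insert_of_max_lt_iff hm hS hml).mp hgap
  · rintro ⟨hlM, hgap⟩
    rcases lt_or_gt_of_ne hlm with hlm | hml
    · refine ⟨m, Finset.mem_insert_of_mem hm, hlm, hasGap_iff.mpr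
        ⟨l, Finset.mem_insert_self _ _, M, ?_, m, ?_, hlm, hmM⟩⟩
      · simp [hmM.ne']
      · simp [hlm.ne']
    · refine ⟨M, Finset.mem_insert_self _ _, hlM, ?_⟩
      rw [Finset.erase_insert hMS]
      exact (hasGap_insert_of_max_lt_iff hm hS hml).mpr hgap

lemma hasGap_image_of_succ_gap {n m : ℕ} {f : Fin (m + 1) → Fin n} (hf : StrictMono f)
    (r : Fin m) (h : (f r.castSucc : ℕ) + 2 ≤ f r.succ) : HasGap (Finset.univ.image f) := by
  classical
  refine hasGap_iff.mpr ⟨_, Finset.mem_image_of_mem f (Finset.mem_univ r.castSucc),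
    _, Finset.mem_image_of_mem f (Finset.mem_univ r.succ), ⟨f r.castSucc + 1, by omega⟩, ?_,
    Fin.lt_def.mpr (by simp), Fin.lt_def.mpr (by simp; omega)⟩
  rintro hx
  obtain ⟨q, -, hq⟩ := Finset.mem_image.mp hx
  have h₁ : r.castSucc < q := hf.lt_iff_lt.mp (Fin.lt_def.mpr (by rw [hq]; simp))
  have h₂ : q < r.succ := hf.lt_iff_lt.mp (Fin.lt_def.mpr (by rw [hq]; simp; omega))
  rw [Fin.lt_def] at h₁ h₂
  simp at h₁ h₂
  omega

lemma not_hasGap_image_of_succ_eq {n m : ℕ} {f : Fin (m + 1) → Fin n}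
    (h : ∀ r : Fin m, (f r.succ : ℕ) = f r.castSucc + 1) : ¬ HasGap (Finset.univ.image f) := by
  classical
  have hf : ∀ r, (f r : ℕ) = f 0 + r := Fin.induction (by simp) fun r ih => by
    rw [h r, ih]; simp; omega
  rw [hasGap_iff]
  rintro ⟨a, ha, b, hb, x, hx, hax, hxb⟩
  obtain ⟨p, -, rfl⟩ := Finset.mem_image.mp ha
  obtain ⟨q, -, rfl⟩ := Finset.mem_image.mp hb
  rw [Fin.lt_def, hf] at hax hxb
  have hq := q.isLt
  refine hx (Finset.mem_image.mpr ⟨⟨x - f 0, by omega⟩, Finset.mem_univ _, Fin.ext ?_⟩)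
  rw [hf]
  simp only
  omega

-- `t` is 0-based: the paper's case `t = k + 1` is `(t : ℕ) = k`.
/-- let `1 ≤ k ≤ n - 3` and let `u = x_{i_1} ⋯ x_{i_{k+2}}` (here `i_1 < ⋯ < i_{k+2}`
is encoded by the strictly monotone map `i : Fin (k+2) → Fin n`) be a minimal generator of
`J_{n,k} = HS_k(I(P_n^c))`, let `t` be the smallest index with `i_{t+1} - i_t ≥ 2`, and let
`A = {1, …, i_{k+2}} ∖ {i_1, …, i_{k+2}}`. Then `set(u) = A` if `t < k+1`, and
`set(u) = A ∖ {i_{k+1} + 1}` if `t = k+1`. (Here `t : Fin (k+1)` is the 0-based version of the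
paper's `t ∈ {1, …, k+1}`, so `t = k+1` in the paper corresponds to `(t : ℕ) = k`.) -/
theorem stmt_15 {K : Type*} [Field K] (n k : ℕ)
    (i : Fin (k + 2) → Fin n) (hi : StrictMono i) (t : Fin (k + 1))
    (hgap : (i t.castSucc : ℕ) + 2 ≤ (i t.succ : ℕ))
    (hmin : ∀ t' : Fin (k + 1), t' < t → (i t'.succ : ℕ) = (i t'.castSucc : ℕ) + 1) :
    ((t : ℕ) < k →
      lqSet K n k (∑ r, Finsupp.single (i r) 1) =
        {l : Fin n | l ≤ i (Fin.last (k + 1)) ∧ l ∉ Set.range i}) ∧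
    ((t : ℕ) = k →
      lqSet K n k (∑ r, Finsupp.single (i r) 1) =
        {l : Fin n | l ≤ i (Fin.last (k + 1)) ∧ l ∉ Set.range i} \
          {l : Fin n | (l : ℕ) = (i (⟨k, by omega⟩ : Fin (k + 2)) : ℕ) + 1}) := by
  classical
  set S := Finset.univ.image fun r : Fin (k + 1) => i r.castSucc
  have hT : Finset.univ.image i = insert (i (Fin.last (k + 1))) S := by
    ext x; simp [S, Fin.exists_fin_succ', or_comm, eq_comm]
  have hsum : ∑ r, Finsupp.single (i r) 1 = sqfree (insert (i (Fin.last (k + 1))) S) := by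
    rw [← hT, sqfree, Finset.sum_image hi.injective.injOn]
  have hcard : (insert (i (Fin.last (k + 1))) S).card = k + 2 := by
    rw [← hT, Finset.card_image_of_injective _ hi.injective, Finset.card_univ, Fintype.card_fin]
  have hmax : ∀ s ∈ S, s ≤ i (Fin.last k).castSucc := by
    simp only [S, Finset.mem_image, Finset.mem_univ, true_and, forall_exists_index]
    rintro _ r rfl
    exact hi.monotone (Fin.castSucc_le_castSucc_iff.mpr (Fin.le_last r))
  have hmem : ∀ l, l ∈ lqSet K n k (∑ r, Finsupp.single (i r) 1) ↔
      l ≤ i (Fin.last (k + 1)) ∧ l ∉ Set.range i ∧ (HasGap S ∨ (l : ℕ) ≠ i ⟨k, by omega⟩ + 1) := by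
    intro l
    have hrange : l ∉ insert (i (Fin.last (k + 1))) S ↔ l ∉ Set.range i := by simp [← hT]
    rw [hsum, mem_lqSet_sqfree_iff hcard, and_congr_right fun hl => exists_exchange_hasGap_iff
      (Finset.mem_image_of_mem _ (Finset.mem_univ _)) hmax (hi (Fin.castSucc_lt_last _)) hl, hrange]
    exact ⟨fun ⟨hl, hlM, h⟩ => ⟨hlM.le, hl, h⟩,
      fun ⟨hlM, hl, h⟩ => ⟨hl, lt_of_le_of_ne hlM fun h => hl ⟨_, h.symm⟩, h⟩⟩
  refine ⟨fun htk => ?_, fun htk => ?_⟩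
  · have hS : HasGap S := hasGap_image_of_succ_gap (hi.comp Fin.strictMono_castSucc) ⟨t, htk⟩ hgap
    ext l
    simp [hmem, hS]
  · have hS : ¬ HasGap S := not_hasGap_image_of_succ_eq fun r =>
      hmin r.castSucc (Fin.lt_def.mpr (by simp [htk]))
    ext l
    simp [hmem, hS, and_assoc]
end

section
/- Let G be a finite simple graph on vertex set {1,…,n} admitting a perfect elimination ordering (i.e., G is chordal), and let L ⊆ K[x_1,…,x_n] be the ideal generated by all squarefree monomials x_{i_1} x_{i_2} x_{i_3} with 1 ≤ i_1 < i_2 < i_3 ≤ n for which there exists t < 3 such that {i_t, i_ℓ} ∉ E(G) for all t < ℓ ≤ 3 (i.e., either {i_1,i_2} ∉ E(G) and {i_1,i_3} ∉ E(G), or {i_2,i_3} ∉ E(G)). Then L is a vertex splittable ideal; in particular L has linear quotients. (L is the first homological shift ideal HS_1(I(G^c)) of the edge ideal of the complement of G.) -/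
open MvPolynomial

/-- The set of exponent vectors of the minimal monomial generators of a monomial ideal `I`:
monomials in `I` which stay outside `I` after dividing by any variable. -/
def minGen {K : Type*} [Field K] {n : ℕ} (I : Ideal (MvPolynomial (Fin n) K)) :
    Set (Fin n →₀ ℕ) :=
  {a | (monomial a (1 : K)) ∈ I ∧
    ∀ i : Fin n, a i ≠ 0 → (monomial (a - Finsupp.single i 1) (1 : K)) ∉ I}

/-- Vertex splittable monomial ideals in the polynomial ring on the set `V` of variables:
the zero ideal, the unit ideal and principal monomial ideals are vertex splittable, and if
`I = x·I₁ + I₂` with `x ∈ V`, `I₁, I₂` vertex splittable ideals in the variables `V ∖ {x}`,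
`I₂ ⊆ I₁` and `G(I)` the disjoint union of `G(x·I₁)` and `G(I₂)`, then `I` is vertex
splittable. -/
inductive VertexSplittable {K : Type*} [Field K] {n : ℕ} :
    Set (Fin n) → Ideal (MvPolynomial (Fin n) K) → Prop
  | top (V : Set (Fin n)) : VertexSplittable V ⊤
  | bot (V : Set (Fin n)) : VertexSplittable V ⊥
  | principal (V : Set (Fin n)) (a : Fin n →₀ ℕ) (ha : ∀ i, a i ≠ 0 → i ∈ V) :
      VertexSplittable V (Ideal.span {monomial a 1})
  | split (V : Set (Fin n)) (x : Fin n) (hx : x ∈ V)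
      (I₁ I₂ : Ideal (MvPolynomial (Fin n) K))
      (h₁ : VertexSplittable (V \ {x}) I₁) (h₂ : VertexSplittable (V \ {x}) I₂)
      (hsub : I₂ ≤ I₁)
      (hdisj : Disjoint (minGen (Ideal.span {MvPolynomial.X x} * I₁)) (minGen I₂))
      (hunion : minGen (Ideal.span {MvPolynomial.X x} * I₁) ∪ minGen I₂ =
        minGen (Ideal.span {MvPolynomial.X x} * I₁ + I₂)) :
      VertexSplittable V (Ideal.span {MvPolynomial.X x} * I₁ + I₂)

/-- A monomial ideal has linear quotients: for some ordering `w_1, …, w_m` of its minimal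
monomial generators, each colon ideal `(w_1, …, w_{j-1}) : w_j` is generated by variables. -/
def HasLinearQuotients {K : Type*} [Field K] {n : ℕ}
    (I : Ideal (MvPolynomial (Fin n) K)) : Prop :=
  ∃ (m : ℕ) (w : Fin m → (Fin n →₀ ℕ)), Function.Injective w ∧ Set.range w = minGen I ∧
    ∀ j : Fin m, ∃ T : Set (Fin n),
      Submodule.colon
        (Ideal.span {p : MvPolynomial (Fin n) K | ∃ i, i < j ∧ p = monomial (w i) 1})
        (Ideal.span {(monomial (w j) (1 : K))})
      = Ideal.span (MvPolynomial.X '' T)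

/-!
Split `L` along the variables in increasing order. The generators of `L` with `i₁ = x` are `x_x`
times the non-edges `x_i x_j` (`x < i < j`) of the graph `H_x` of those edges of `G` that meet the
neighbourhood of `x`, and every generator with `i₁ > x` is divisible by such a non-edge; so
`L_{≥x} = x_x·I(H_x^c) + L_{>x}` with `L_{>x} ⊆ I(H_x^c)`. Listed as the non-neighbours of `x`
followed by its neighbours, the vertices above `x` form a perfect elimination ordering of `H_x`;
along such an ordering `w :: L` the complement edge ideal splits at `w` as
`x_w·(x_j : j not adjacent to w) + I(H[L]^c)`, the inclusion being the clique condition at `w`.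

Vertex splittable ideals have linear quotients: list `x·G(I₁)` before `G(I₂)`. The colon ideals
of the first block are those of `I₁`, and those of the second block are those of `I₂` plus `(x)`,
because `I₂ ⊆ I₁`.
-/

theorem Finsupp.isAntichain_of_degree_eq {σ : Type*} {S : Set (σ →₀ ℕ)} {d : ℕ}
    (h : ∀ a ∈ S, a.degree = d) : IsAntichain (· ≤ ·) S := by
  intro a ha b hb hne hab
  obtain ⟨c, rfl⟩ := le_iff_exists_add.mp hab
  have : c.degree = 0 := by simpa [h a ha] using h _ hb
  exact hne (by simp [(Finsupp.degree_eq_zero_iff c).mp this])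

theorem Finsupp.exists_le_tsub_single_of_lt {σ : Type*} {a b : σ →₀ ℕ} (hab : a < b) :
    ∃ i, a ≤ b - Finsupp.single i 1 ∧ b i ≠ 0 := by
  obtain ⟨i, hi⟩ : ∃ i, a i < b i := by
    by_contra! h
    exact hab.not_ge h
  refine ⟨i, fun j => ?_, by omega⟩
  rcases eq_or_ne j i with rfl | hj
  · rw [Finsupp.tsub_apply, Finsupp.single_eq_same]
    omega
  · simpa [Finsupp.single_eq_of_ne' hj.symm] using hab.le j

theorem Fin.range_append {α : Type*} {m k : ℕ} (u : Fin m → α) (v : Fin k → α) :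
    Set.range (Fin.append u v) = Set.range u ∪ Set.range v := by
  ext a
  constructor
  · rintro ⟨j, rfl⟩
    induction j using Fin.addCases <;> simp
  · rintro (⟨i, rfl⟩ | ⟨i, rfl⟩)
    exacts [⟨_, Fin.append_left u v i⟩, ⟨_, Fin.append_right u v i⟩]

theorem Fin.image_append_Iio_castAdd {α : Type*} {m k : ℕ} (u : Fin m → α) (v : Fin k → α)
    (i : Fin m) : Fin.append u v '' Set.Iio (Fin.castAdd k i) = u '' Set.Iio i := by
  ext a
  simp only [Set.mem_image, Set.mem_Iio, Fin.lt_def]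
  constructor
  · rintro ⟨j, hj, rfl⟩
    induction j using Fin.addCases with
    | left j => exact ⟨j, by simpa using hj, (Fin.append_left u v j).symm⟩
    | right j => simp only [Fin.val_castAdd, Fin.val_natAdd] at hj; omega
  · rintro ⟨j, hj, rfl⟩
    exact ⟨Fin.castAdd k j, by simpa using hj, Fin.append_left u v j⟩

theorem Fin.image_append_Iio_natAdd {α : Type*} {m k : ℕ} (u : Fin m → α) (v : Fin k → α)
    (i : Fin k) : Fin.append u v '' Set.Iio (Fin.natAdd m i) = Set.range u ∪ v '' Set.Iio i := by
  ext a
  simp only [Set.mem_image, Set.mem_Iio, Set.mem_union, Set.mem_range, Fin.lt_def]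
  constructor
  · rintro ⟨j, hj, rfl⟩
    induction j using Fin.addCases with
    | left j => exact .inl ⟨j, (Fin.append_left u v j).symm⟩
    | right j => exact .inr ⟨j, by simpa using hj, (Fin.append_right u v j).symm⟩
  · rintro (⟨j, rfl⟩ | ⟨j, hj, rfl⟩)
    · exact ⟨Fin.castAdd k j, by simp only [Fin.val_castAdd, Fin.val_natAdd]; omega,
        Fin.append_left u v j⟩
    · exact ⟨Fin.natAdd m j, by simpa using hj, Fin.append_right u v j⟩

namespace MvPolynomial

section MonomialIdeal

variable {σ : Type*} (R : Type*) [CommSemiring R]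

noncomputable def monomialIdeal (S : Set (σ →₀ ℕ)) : Ideal (MvPolynomial σ R) :=
  Ideal.span ((monomial · 1) '' S)

variable {R}

theorem mem_monomialIdeal {p : MvPolynomial σ R} {S : Set (σ →₀ ℕ)} :
    p ∈ monomialIdeal R S ↔ ∀ c ∈ p.support, ∃ a ∈ S, a ≤ c :=
  mem_ideal_span_monomial_image

theorem monomial_mem_monomialIdeal [Nontrivial R] {b : σ →₀ ℕ} {S : Set (σ →₀ ℕ)} :
    monomial b (1 : R) ∈ monomialIdeal R S ↔ ∃ a ∈ S, a ≤ b := by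
  classical
  simp [mem_monomialIdeal, support_monomial]

theorem monomialIdeal_union (S T : Set (σ →₀ ℕ)) :
    monomialIdeal R (S ∪ T) = monomialIdeal R S + monomialIdeal R T := by
  rw [monomialIdeal, Set.image_union, Ideal.span_union]; rfl

@[simp]
theorem monomialIdeal_empty : monomialIdeal R (∅ : Set (σ →₀ ℕ)) = ⊥ := by
  rw [monomialIdeal, Set.image_empty, Ideal.span_empty]

theorem monomialIdeal_singleton (a : σ →₀ ℕ) :
    monomialIdeal R {a} = Ideal.span {monomial a (1 : R)} := by
  rw [monomialIdeal, Set.image_singleton]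

@[simp]
theorem monomialIdeal_singleton_zero : monomialIdeal R ({0} : Set (σ →₀ ℕ)) = ⊤ := by
  rw [monomialIdeal_singleton, monomial_zero', C_1, Ideal.span_singleton_one]

theorem monomialIdeal_le_monomialIdeal [Nontrivial R] {S T : Set (σ →₀ ℕ)}
    (h : ∀ b ∈ T, ∃ a ∈ S, a ≤ b) : monomialIdeal R T ≤ monomialIdeal R S := by
  rw [monomialIdeal, Ideal.span_le]
  rintro _ ⟨b, hb, rfl⟩
  exact monomial_mem_monomialIdeal.mpr (h b hb)

theorem span_X_image_eq_monomialIdeal (T : Set σ) :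
    Ideal.span (X '' T) = monomialIdeal R ((Finsupp.single · 1) '' T) := by
  rw [monomialIdeal, Set.image_image]; rfl

theorem span_X_mul_monomialIdeal (x : σ) (S : Set (σ →₀ ℕ)) :
    Ideal.span {X x} * monomialIdeal R S = monomialIdeal R ((Finsupp.single x 1 + ·) '' S) := by
  simp only [monomialIdeal, Ideal.span_mul_span', Set.singleton_mul, Set.image_image, X,
    monomial_mul, one_mul]

theorem colon_span_monomial_monomialIdeal (S : Set (σ →₀ ℕ)) (u : σ →₀ ℕ) :
    (monomialIdeal R S).colon (Ideal.span {monomial u (1 : R)}) =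
      monomialIdeal R ((· - u) '' S) := by
  ext r
  rw [← Ideal.submodule_span_eq, Submodule.mem_colon_span_singleton, smul_eq_mul,
    mem_monomialIdeal, mem_monomialIdeal]
  constructor
  · intro h c hc
    have hcu : c + u ∈ (r * monomial u 1).support := by
      simpa [mem_support_iff, coeff_mul_monomial'] using hc
    obtain ⟨a, haS, hle⟩ := h _ hcu
    exact ⟨a - u, ⟨a, haS, rfl⟩, tsub_le_iff_right.mpr hle⟩
  · intro h c hc
    rw [mem_support_iff, coeff_mul_monomial'] at hc
    split_ifs at hc with hu
    · obtain ⟨_, ⟨a, haS, rfl⟩, hle⟩ := h _ (mem_support_iff.mpr (by simpa using hc))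
      exact ⟨a, haS, (tsub_le_iff_right.mp hle).trans_eq (tsub_add_cancel_of_le hu)⟩
    · exact absurd rfl hc

theorem monomial_mem_of_le {I : Ideal (MvPolynomial σ R)} {a b : σ →₀ ℕ}
    (ha : monomial a (1 : R) ∈ I) (hab : a ≤ b) : monomial b (1 : R) ∈ I := by
  rw [← tsub_add_cancel_of_le hab, ← one_mul (1 : R), ← monomial_mul]
  exact I.mul_mem_left _ ha

end MonomialIdeal

end MvPolynomial

section VertexSplittable

variable {K : Type*} [Field K] {n : ℕ}

theorem isAntichain_minGen (I : Ideal (MvPolynomial (Fin n) K)) :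
    IsAntichain (· ≤ ·) (minGen I) := by
  rintro a ⟨haI, -⟩ b ⟨-, hbmin⟩ hne hab
  obtain ⟨i, hle, hi⟩ := Finsupp.exists_le_tsub_single_of_lt (hab.lt_of_ne hne)
  exact hbmin i hi (monomial_mem_of_le haI hle)

theorem minGen_monomialIdeal {S : Set (Fin n →₀ ℕ)} (hS : IsAntichain (· ≤ ·) S) :
    minGen (monomialIdeal K S) = S := by
  ext b
  refine ⟨fun ⟨hbI, hbmin⟩ => ?_, fun hbS => ⟨monomial_mem_monomialIdeal.mpr ⟨b, hbS, le_rfl⟩, ?_⟩⟩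
  · obtain ⟨a, haS, hab⟩ := monomial_mem_monomialIdeal.mp hbI
    by_contra hbS
    obtain ⟨i, hle, hi⟩ :=
      Finsupp.exists_le_tsub_single_of_lt (hab.lt_of_ne (ne_of_mem_of_not_mem haS hbS))
    exact hbmin i hi (monomial_mem_monomialIdeal.mpr ⟨a, haS, hle⟩)
  · intro i hi hmem
    obtain ⟨a, haS, hab⟩ := monomial_mem_monomialIdeal.mp hmem
    obtain rfl := hS.eq haS hbS (hab.trans tsub_le_self)
    have := hab i
    rw [Finsupp.tsub_apply, Finsupp.single_eq_same] at this
    omega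

theorem VertexSplittable.mono {V W : Set (Fin n)} {I : Ideal (MvPolynomial (Fin n) K)}
    (h : VertexSplittable V I) (hVW : V ⊆ W) : VertexSplittable W I := by
  induction h generalizing W with
  | top => exact .top W
  | bot => exact .bot W
  | principal V a ha => exact .principal W a fun i hi => hVW (ha i hi)
  | split V x hx I₁ I₂ _ _ hsub hdisj hunion ih₁ ih₂ =>
    exact .split W x (hVW hx) I₁ I₂ (ih₁ (Set.sdiff_subset_sdiff_left hVW))
      (ih₂ (Set.sdiff_subset_sdiff_left hVW)) hsub hdisj hunion

theorem minGen_top : minGen (⊤ : Ideal (MvPolynomial (Fin n) K)) = {0} := by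
  rw [← monomialIdeal_singleton_zero,
    minGen_monomialIdeal (Set.subsingleton_singleton.isAntichain _)]

theorem minGen_bot : minGen (⊥ : Ideal (MvPolynomial (Fin n) K)) = ∅ := by
  rw [← monomialIdeal_empty, minGen_monomialIdeal (Set.subsingleton_empty.isAntichain _)]

theorem minGen_span_monomial (a : Fin n →₀ ℕ) :
    minGen (Ideal.span {monomial a (1 : K)}) = {a} := by
  rw [← monomialIdeal_singleton, minGen_monomialIdeal (Set.subsingleton_singleton.isAntichain _)]

theorem span_X_mul_eq_monomialIdeal {I : Ideal (MvPolynomial (Fin n) K)}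
    (hI : I = monomialIdeal K (minGen I)) (x : Fin n) :
    Ideal.span {X x} * I = monomialIdeal K ((Finsupp.single x 1 + ·) '' minGen I) := by
  conv_lhs => rw [hI]
  exact span_X_mul_monomialIdeal x _

theorem minGen_span_X_mul {I : Ideal (MvPolynomial (Fin n) K)}
    (hI : I = monomialIdeal K (minGen I)) (x : Fin n) :
    minGen (Ideal.span {X x} * I) = (Finsupp.single x 1 + ·) '' minGen I := by
  rw [span_X_mul_eq_monomialIdeal hI,
    minGen_monomialIdeal ((isAntichain_minGen I).image _ fun _ _ => le_of_add_le_add_left)]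

theorem VertexSplittable.eq_monomialIdeal_minGen {V : Set (Fin n)}
    {I : Ideal (MvPolynomial (Fin n) K)} (h : VertexSplittable V I) :
    I = monomialIdeal K (minGen I) := by
  induction h with
  | top => rw [minGen_top, monomialIdeal_singleton_zero]
  | bot => rw [minGen_bot, monomialIdeal_empty]
  | principal V a => rw [minGen_span_monomial, monomialIdeal_singleton]
  | split V x _ I₁ I₂ _ _ _ _ hunion ih₁ ih₂ =>
    rw [← hunion, monomialIdeal_union, minGen_span_X_mul ih₁, ← span_X_mul_eq_monomialIdeal ih₁,
      ← ih₂]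

theorem VertexSplittable.support_subset {V : Set (Fin n)} {I : Ideal (MvPolynomial (Fin n) K)}
    (h : VertexSplittable V I) {a : Fin n →₀ ℕ} (ha : a ∈ minGen I) : ↑a.support ⊆ V := by
  induction h generalizing a with
  | top => simp_all [minGen_top]
  | bot => simp_all [minGen_bot]
  | principal V b hb =>
    rw [minGen_span_monomial, Set.mem_singleton_iff] at ha
    exact ha ▸ fun i hi => hb i (Finsupp.mem_support_iff.mp hi)
  | split V x hx I₁ I₂ h₁ _ _ _ hunion ih₁ ih₂ =>
    rw [← hunion, minGen_span_X_mul h₁.eq_monomialIdeal_minGen] at ha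
    rcases ha with ⟨a, ha, rfl⟩ | ha
    · intro i hi
      rcases eq_or_ne i x with rfl | hix
      · exact hx
      · exact (ih₁ ha (by simpa [Finsupp.single_eq_of_ne' hix.symm] using hi)).1
    · exact (ih₂ ha).trans Set.sdiff_subset

theorem VertexSplittable.apply_eq_zero {V : Set (Fin n)} {I : Ideal (MvPolynomial (Fin n) K)}
    (h : VertexSplittable V I) {a : Fin n →₀ ℕ} (ha : a ∈ minGen I) {x : Fin n} (hx : x ∉ V) :
    a x = 0 :=
  Finsupp.notMem_support_iff.mp fun hax => hx (h.support_subset ha hax)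

end VertexSplittable

section LinearQuotients

variable (K : Type*) [Field K] {n : ℕ}

/-- By `colon_span_monomial_monomialIdeal`, the `j`-th condition says that
`(w 0, …, w (j - 1)) : w j` is generated by variables. -/
def IsLinearQuotientOrder {m : ℕ} (w : Fin m → Fin n →₀ ℕ) : Prop :=
  ∀ j, ∃ T : Set (Fin n),
    monomialIdeal K ((· - w j) '' (w '' Set.Iio j)) = monomialIdeal K ((Finsupp.single · 1) '' T)

variable {K}

theorem IsLinearQuotientOrder.hasLinearQuotients {I : Ideal (MvPolynomial (Fin n) K)} {m : ℕ}
    {w : Fin m → Fin n →₀ ℕ} (hw : IsLinearQuotientOrder K w) (hinj : w.Injective)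
    (hrange : Set.range w = minGen I) : HasLinearQuotients I := by
  refine ⟨m, w, hinj, hrange, fun j => ?_⟩
  obtain ⟨T, hT⟩ := hw j
  have hprefix : {p : MvPolynomial (Fin n) K | ∃ i, i < j ∧ p = monomial (w i) 1} =
      (monomial · 1) '' (w '' Set.Iio j) := by
    ext p
    simp [eq_comm]
  refine ⟨T, ?_⟩
  rw [hprefix, ← monomialIdeal, colon_span_monomial_monomialIdeal, hT,
    span_X_image_eq_monomialIdeal]

theorem isLinearQuotientOrder_of_subsingleton {m : ℕ} [Subsingleton (Fin m)]
    (w : Fin m → Fin n →₀ ℕ) : IsLinearQuotientOrder K w := by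
  intro j
  refine ⟨∅, ?_⟩
  have : Set.Iio j = ∅ := by
    ext i
    simp [Subsingleton.elim i j]
  simp [this]

theorem monomialIdeal_image_single_add_tsub {S : Set (Fin n →₀ ℕ)} {x : Fin n}
    {u a₀ : Fin n →₀ ℕ} (hu : u x = 0) (ha₀ : a₀ ∈ S) (ha₀x : a₀ x = 0) (ha₀u : a₀ ≤ u) :
    monomialIdeal K ((· - u) '' ((Finsupp.single x 1 + ·) '' S)) =
      monomialIdeal K {Finsupp.single x 1} := by
  have hmin : Finsupp.single x 1 + a₀ - u = Finsupp.single x 1 := by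
    ext i
    rcases eq_or_ne i x with rfl | hix
    · simp [hu, ha₀x]
    · simp [Finsupp.single_eq_of_ne' hix.symm, ha₀u i]
  apply le_antisymm <;> apply monomialIdeal_le_monomialIdeal
  · rintro _ ⟨_, ⟨a, -, rfl⟩, rfl⟩
    refine ⟨_, rfl, Finsupp.single_le_iff.mpr ?_⟩
    simp [hu]
  · rintro _ rfl
    exact ⟨_, ⟨_, ⟨a₀, ha₀, rfl⟩, rfl⟩, hmin.le⟩

theorem IsLinearQuotientOrder.append {m₁ m₂ : ℕ} {w₁ : Fin m₁ → Fin n →₀ ℕ}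
    {w₂ : Fin m₂ → Fin n →₀ ℕ} (h₁ : IsLinearQuotientOrder K w₁)
    (h₂ : IsLinearQuotientOrder K w₂) {x : Fin n} (hx₁ : ∀ i, w₁ i x = 0)
    (hx₂ : ∀ i, w₂ i x = 0) (hdom : ∀ i, ∃ k, w₁ k ≤ w₂ i) :
    IsLinearQuotientOrder K (Fin.append ((Finsupp.single x 1 + ·) ∘ w₁) w₂) := by
  intro j
  induction j using Fin.addCases with
  | left i =>
    obtain ⟨T, hT⟩ := h₁ i
    refine ⟨T, ?_⟩
    rw [Set.image_image] at hT
    rw [Fin.append_left, Fin.image_append_Iio_castAdd, Set.image_image]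
    simpa only [Function.comp_apply, add_tsub_add_eq_tsub_left] using hT
  | right i =>
    obtain ⟨T, hT⟩ := h₂ i
    obtain ⟨k, hk⟩ := hdom i
    refine ⟨insert x T, ?_⟩
    rw [Fin.append_right, Fin.image_append_Iio_natAdd, Set.image_union, monomialIdeal_union, hT,
      Set.range_comp, monomialIdeal_image_single_add_tsub (hx₂ i) (Set.mem_range_self k) (hx₁ k) hk,
      Set.image_insert_eq, Set.insert_eq, monomialIdeal_union]

theorem VertexSplittable.exists_isLinearQuotientOrder {V : Set (Fin n)}
    {I : Ideal (MvPolynomial (Fin n) K)} (h : VertexSplittable V I) :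
    ∃ (m : ℕ) (w : Fin m → Fin n →₀ ℕ),
      w.Injective ∧ Set.range w = minGen I ∧ IsLinearQuotientOrder K w := by
  induction h with
  | top =>
    exact ⟨1, fun _ => 0, Function.injective_of_subsingleton _,
      by rw [Set.range_const, minGen_top], isLinearQuotientOrder_of_subsingleton _⟩
  | bot =>
    exact ⟨0, Fin.elim0, Function.injective_of_subsingleton _,
      by rw [Set.range_eq_empty, minGen_bot], isLinearQuotientOrder_of_subsingleton _⟩
  | principal V a =>
    exact ⟨1, fun _ => a, Function.injective_of_subsingleton _,
      by rw [Set.range_const, minGen_span_monomial], isLinearQuotientOrder_of_subsingleton _⟩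
  | split V x hx I₁ I₂ h₁ h₂ hsub _ hunion ih₁ ih₂ =>
    obtain ⟨m₁, w₁, hinj₁, hrange₁, hw₁⟩ := ih₁
    obtain ⟨m₂, w₂, hinj₂, hrange₂, hw₂⟩ := ih₂
    have hx₁ : ∀ i, w₁ i x = 0 := fun i =>
      h₁.apply_eq_zero (hrange₁ ▸ Set.mem_range_self i) fun hx => hx.2 rfl
    have hx₂ : ∀ i, w₂ i x = 0 := fun i =>
      h₂.apply_eq_zero (hrange₂ ▸ Set.mem_range_self i) fun hx => hx.2 rfl
    have hdom : ∀ i, ∃ k, w₁ k ≤ w₂ i := by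
      intro i
      have hmem : monomial (w₂ i) (1 : K) ∈ I₁ :=
        hsub ((hrange₂ ▸ Set.mem_range_self i : w₂ i ∈ minGen I₂).1)
      rw [h₁.eq_monomialIdeal_minGen, monomial_mem_monomialIdeal, ← hrange₁] at hmem
      obtain ⟨_, ⟨k, rfl⟩, hk⟩ := hmem
      exact ⟨k, hk⟩
    refine ⟨m₁ + m₂, _, Fin.append_injective_iff.mpr ⟨?_, hinj₂, fun i j hij => ?_⟩, ?_,
      hw₁.append hw₂ hx₁ hx₂ hdom⟩
    · exact (add_right_injective _).comp hinj₁
    · simpa [hx₁, hx₂] using congrArg (· x) hij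
    · rw [Fin.range_append, Set.range_comp, hrange₁, hrange₂, ← hunion,
        minGen_span_X_mul h₁.eq_monomialIdeal_minGen]

theorem VertexSplittable.hasLinearQuotients {V : Set (Fin n)}
    {I : Ideal (MvPolynomial (Fin n) K)} (h : VertexSplittable V I) : HasLinearQuotients I :=
  let ⟨_, _, hinj, hrange, hw⟩ := h.exists_isLinearQuotientOrder
  hw.hasLinearQuotients hinj hrange

end LinearQuotients

namespace SimpleGraph

variable {α : Type*}

def IsPerfectEliminationOrdering (H : SimpleGraph α) : List α → Prop
  | [] => True
  | w :: L => (∀ j ∈ L, ∀ k ∈ L, H.Adj w j → H.Adj w k → j ≠ k → H.Adj j k) ∧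
      H.IsPerfectEliminationOrdering L

/-- The exponents of the generators of the edge ideal `I(H[s]^c)`. -/
def nonEdgeExponents (H : SimpleGraph α) (s : Set α) : Set (α →₀ ℕ) :=
  {a | ∃ i ∈ s, ∃ j ∈ s, i ≠ j ∧ ¬ H.Adj i j ∧ a = Finsupp.single i 1 + Finsupp.single j 1}

def edgesMeeting (G : SimpleGraph α) (s : Set α) : SimpleGraph α where
  Adj i j := G.Adj i j ∧ (i ∈ s ∨ j ∈ s)
  symm := ⟨fun _ _ h => ⟨h.1.symm, h.2.symm⟩⟩
  loopless := ⟨fun i h => G.loopless.irrefl i h.1⟩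

variable {H : SimpleGraph α}

theorem IsPerfectEliminationOrdering.append {L₁ L₂ : List α}
    (h₁ : ∀ w ∈ L₁, ∀ j ∈ L₁ ++ L₂, ∀ k ∈ L₁ ++ L₂, H.Adj w j → H.Adj w k → j ≠ k → H.Adj j k)
    (h₂ : H.IsPerfectEliminationOrdering L₂) : H.IsPerfectEliminationOrdering (L₁ ++ L₂) := by
  induction L₁ with
  | nil => exact h₂
  | cons w L₁ ih =>
    exact ⟨fun j hj k hk => h₁ w List.mem_cons_self j (List.mem_cons_of_mem _ hj) k
        (List.mem_cons_of_mem _ hk),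
      ih fun v hv j hj k hk => h₁ v (List.mem_cons_of_mem _ hv) j (List.mem_cons_of_mem _ hj) k
        (List.mem_cons_of_mem _ hk)⟩

theorem isPerfectEliminationOrdering_of_pairwise_lt [Preorder α] {L : List α}
    (hL : L.Pairwise (· < ·))
    (h : ∀ w ∈ L, ∀ j ∈ L, ∀ k ∈ L, w < j → w < k → H.Adj w j → H.Adj w k → j ≠ k → H.Adj j k) :
    H.IsPerfectEliminationOrdering L := by
  induction L with
  | nil => trivial
  | cons w L ih =>
    rw [List.pairwise_cons] at hL
    exact ⟨fun j hj k hk => h w List.mem_cons_self j (List.mem_cons_of_mem _ hj) k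
        (List.mem_cons_of_mem _ hk) (hL.1 j hj) (hL.1 k hk),
      ih hL.2 fun v hv j hj k hk => h v (List.mem_cons_of_mem _ hv) j (List.mem_cons_of_mem _ hj) k
        (List.mem_cons_of_mem _ hk)⟩

theorem degree_of_mem_nonEdgeExponents {s : Set α} {a : α →₀ ℕ} (ha : a ∈ H.nonEdgeExponents s) :
    a.degree = 2 := by
  obtain ⟨i, -, j, -, -, -, rfl⟩ := ha
  simp

theorem nonEdgeExponents_insert {s : Set α} {w : α} (hw : w ∉ s) :
    H.nonEdgeExponents (insert w s) =
      (Finsupp.single w 1 + ·) '' ((Finsupp.single · 1) '' {j ∈ s | ¬ H.Adj w j}) ∪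
        H.nonEdgeExponents s := by
  ext a
  simp only [nonEdgeExponents, Set.mem_union, Set.mem_image, Set.mem_insert_iff]
  constructor
  · rintro ⟨i, rfl | hi, j, rfl | hj, hne, hnadj, rfl⟩
    · exact absurd rfl hne
    · exact .inl ⟨_, ⟨j, ⟨hj, hnadj⟩, rfl⟩, rfl⟩
    · exact .inl ⟨_, ⟨i, ⟨hi, fun h => hnadj h.symm⟩, rfl⟩, add_comm _ _⟩
    · exact .inr ⟨i, hi, j, hj, hne, hnadj, rfl⟩
  · rintro (⟨_, ⟨j, ⟨hj, hnadj⟩, rfl⟩, rfl⟩ | ⟨i, hi, j, hj, hne, hnadj, rfl⟩)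
    · exact ⟨w, .inl rfl, j, .inr hj, fun h => hw (h ▸ hj), hnadj, rfl⟩
    · exact ⟨i, .inr hi, j, .inr hj, hne, hnadj, rfl⟩

end SimpleGraph

section Constructions

variable {K : Type*} [Field K] {n : ℕ}

theorem VertexSplittable.monomialIdeal_split {V : Set (Fin n)} {x : Fin n} (hx : x ∈ V)
    {S₁ S₂ : Set (Fin n →₀ ℕ)}
    (hS : IsAntichain (· ≤ ·) ((Finsupp.single x 1 + ·) '' S₁ ∪ S₂)) (hx₂ : ∀ a ∈ S₂, a x = 0)
    (h₁ : VertexSplittable (V \ {x}) (monomialIdeal K S₁))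
    (h₂ : VertexSplittable (V \ {x}) (monomialIdeal K S₂)) (hdom : ∀ b ∈ S₂, ∃ a ∈ S₁, a ≤ b) :
    VertexSplittable V (monomialIdeal K ((Finsupp.single x 1 + ·) '' S₁ ∪ S₂)) := by
  have hmin₁ : minGen (Ideal.span {X x} * monomialIdeal K S₁) =
      (Finsupp.single x 1 + ·) '' S₁ := by
    rw [span_X_mul_monomialIdeal, minGen_monomialIdeal (hS.subset Set.subset_union_left)]
  have hmin₂ : minGen (monomialIdeal K S₂) = S₂ :=
    minGen_monomialIdeal (hS.subset Set.subset_union_right)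
  have hsplit := VertexSplittable.split V x hx _ _ h₁ h₂ (monomialIdeal_le_monomialIdeal hdom)
    (by
      rw [hmin₁, hmin₂, Set.disjoint_left]
      rintro _ ⟨a, -, rfl⟩ ha
      simpa using hx₂ _ ha)
    (by rw [hmin₁, hmin₂, span_X_mul_monomialIdeal, ← monomialIdeal_union, minGen_monomialIdeal hS])
  rwa [span_X_mul_monomialIdeal, ← monomialIdeal_union] at hsplit

theorem vertexSplittable_monomialIdeal_single (s : Set (Fin n)) :
    VertexSplittable s (monomialIdeal K ((Finsupp.single · 1) '' s)) := by
  induction s, s.toFinite using Set.Finite.induction_on with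
  | empty => simpa using VertexSplittable.bot ∅
  | @insert a s ha _ ih =>
    have hdecomp : (Finsupp.single · 1) '' insert a s =
        (Finsupp.single a 1 + ·) '' {0} ∪ (Finsupp.single · 1) '' s := by
      rw [Set.image_insert_eq, Set.image_singleton, add_zero, Set.insert_eq]
    rw [hdecomp]
    refine .monomialIdeal_split (Set.mem_insert a s) ?_ ?_ ?_ ?_ fun b _ => ⟨0, rfl, zero_le⟩
    · rw [← hdecomp]
      refine Finsupp.isAntichain_of_degree_eq (d := 1) ?_
      rintro _ ⟨j, -, rfl⟩
      exact Finsupp.degree_single j 1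
    · rintro _ ⟨j, hj, rfl⟩
      exact Finsupp.single_eq_of_ne' fun hja => ha (hja ▸ hj)
    · simpa using VertexSplittable.top _
    · exact ih.mono (Set.subset_sdiff_singleton (Set.subset_insert a s) ha)

theorem vertexSplittable_nonEdgeExponents {H : SimpleGraph (Fin n)} {L : List (Fin n)}
    (hL : L.Nodup) (hH : H.IsPerfectEliminationOrdering L) :
    VertexSplittable {i | i ∈ L} (monomialIdeal K (H.nonEdgeExponents {i | i ∈ L})) := by
  induction L with
  | nil => simpa [SimpleGraph.nonEdgeExponents] using VertexSplittable.bot ∅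
  | cons w L ih =>
    obtain ⟨hw, hL⟩ := List.nodup_cons.mp hL
    have hcons : {i | i ∈ w :: L} = insert w {i | i ∈ L} := by ext; simp
    have hsub : {i | i ∈ L} ⊆ insert w {i | i ∈ L} \ {w} :=
      Set.subset_sdiff_singleton (Set.subset_insert _ _) hw
    have hdecomp := SimpleGraph.nonEdgeExponents_insert (H := H) (s := {i | i ∈ L}) hw
    rw [hcons, hdecomp]
    refine .monomialIdeal_split (Set.mem_insert _ _) ?_ ?_ ?_ ?_ ?_
    · rw [← hdecomp]
      exact Finsupp.isAntichain_of_degree_eq fun _ => SimpleGraph.degree_of_mem_nonEdgeExponents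
    · rintro _ ⟨i, hi, j, hj, -, -, rfl⟩
      have hiw : i ≠ w := fun h => hw (h ▸ hi)
      have hjw : j ≠ w := fun h => hw (h ▸ hj)
      simp [Finsupp.single_eq_of_ne' hiw, Finsupp.single_eq_of_ne' hjw]
    · exact (vertexSplittable_monomialIdeal_single _).mono fun i hi => hsub hi.1
    · exact (ih hL hH.2).mono hsub
    · rintro _ ⟨i, hi, j, hj, hne, hnadj, rfl⟩
      by_cases hwi : H.Adj w i
      · exact ⟨_, ⟨j, ⟨hj, fun hwj => hnadj (hH.1 i hi j hj hwi hwj hne)⟩, rfl⟩, le_add_self⟩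
      · exact ⟨_, ⟨i, ⟨hi, hwi⟩, rfl⟩, le_self_add⟩

end Constructions

section Triples

variable {n : ℕ} (G : SimpleGraph (Fin n))

/-- `tripleExponents G 0` is the set of exponents of the generators of `L`. -/
def tripleExponents (m : ℕ) : Set (Fin n →₀ ℕ) :=
  {a | ∃ i₁ i₂ i₃ : Fin n, m ≤ (i₁ : ℕ) ∧ i₁ < i₂ ∧ i₂ < i₃ ∧
    ((¬ G.Adj i₁ i₂ ∧ ¬ G.Adj i₁ i₃) ∨ ¬ G.Adj i₂ i₃) ∧
    a = Finsupp.single i₁ 1 + Finsupp.single i₂ 1 + Finsupp.single i₃ 1}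

variable {G}

theorem degree_of_mem_tripleExponents {m : ℕ} {a : Fin n →₀ ℕ} (ha : a ∈ tripleExponents G m) :
    a.degree = 3 := by
  obtain ⟨i₁, i₂, i₃, -, -, -, -, rfl⟩ := ha
  simp

theorem tripleExponents_eq_empty {m : ℕ} (hm : n ≤ m) : tripleExponents G m = ∅ :=
  Set.eq_empty_of_forall_notMem fun _ ⟨i₁, _, _, hi₁, _⟩ => by omega

theorem tripleExponents_eq_union (x : Fin n) :
    tripleExponents G x =
      (Finsupp.single x 1 + ·) '' (G.edgesMeeting (G.neighborSet x)).nonEdgeExponents {j | x < j} ∪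
        tripleExponents G ((x : ℕ) + 1) := by
  have hnadj : ∀ i j, ¬ (G.edgesMeeting (G.neighborSet x)).Adj i j ↔
      (¬ G.Adj x i ∧ ¬ G.Adj x j) ∨ ¬ G.Adj i j := by
    intro i j
    simp only [SimpleGraph.edgesMeeting, SimpleGraph.mem_neighborSet]
    tauto
  ext a
  constructor
  · rintro ⟨i₁, i₂, i₃, hx, h12, h23, hc, rfl⟩
    rcases (Nat.le_iff_lt_or_eq.mp hx) with hx | hx
    · exact .inr ⟨i₁, i₂, i₃, hx, h12, h23, hc, rfl⟩
    · obtain rfl : x = i₁ := Fin.ext hx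
      refine .inl ⟨_, ⟨i₂, h12, i₃, h12.trans h23, h23.ne, (hnadj _ _).mpr hc, rfl⟩, ?_⟩
      rw [add_assoc]
  · rintro (⟨_, ⟨i, hi, j, hj, hne, hij, rfl⟩, rfl⟩ | ⟨i₁, i₂, i₃, hx, h12, h23, hc, rfl⟩)
    · rcases lt_or_gt_of_ne hne with hlt | hlt
      · exact ⟨x, i, j, le_rfl, hi, hlt, (hnadj i j).mp hij, (add_assoc _ _ _).symm⟩
      · refine ⟨x, j, i, le_rfl, hj, hlt, (hnadj j i).mp fun h => hij h.symm, ?_⟩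
        rw [add_assoc, add_comm (Finsupp.single i 1)]
    · exact ⟨i₁, i₂, i₃, by omega, h12, h23, hc, rfl⟩

variable (hG : ∀ i j k : Fin n, i < j → i < k → G.Adj i j → G.Adj i k → j ≠ k → G.Adj j k)
include hG

theorem exists_isPerfectEliminationOrdering_edgesMeeting (x : Fin n) :
    ∃ L : List (Fin n), L.Nodup ∧ {i | i ∈ L} = {j | x < j} ∧
      (G.edgesMeeting (G.neighborSet x)).IsPerfectEliminationOrdering L := by
  classical
  let M := (List.finRange n).filter fun j => x < j ∧ ¬ G.Adj x j
  let N := (List.finRange n).filter fun j => x < j ∧ G.Adj x j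
  have hM : ∀ j, j ∈ M ↔ x < j ∧ ¬ G.Adj x j := by simp [M]
  have hN : ∀ j, j ∈ N ↔ x < j ∧ G.Adj x j := by simp [N]
  have hMN : ∀ j, j ∈ M ++ N ↔ x < j := by simp only [List.mem_append, hM, hN]; tauto
  refine ⟨M ++ N, ?_, Set.ext hMN, .append ?_ ?_⟩
  · exact (List.nodup_finRange n).filter _ |>.append ((List.nodup_finRange n).filter _)
      fun j hjM hjN => ((hM j).mp hjM).2 ((hN j).mp hjN).2
  · intro w hw j hj k hk hwj hwk hjk
    have hxw := ((hM w).mp hw).2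
    have hxj : G.Adj x j := hwj.2.resolve_left hxw
    exact ⟨hG x j k ((hMN j).mp hj) ((hMN k).mp hk) hxj (hwk.2.resolve_left hxw) hjk, .inl hxj⟩
  · refine SimpleGraph.isPerfectEliminationOrdering_of_pairwise_lt
      ((List.pairwise_lt_finRange n).filter _) ?_
    intro w _ j hj k _ hwj hwk hAwj hAwk hjk
    exact ⟨hG w j k hwj hwk hAwj.1 hAwk.1 hjk, .inl ((hN j).mp hj).2⟩

variable {K : Type*} [Field K]

theorem vertexSplittable_tripleExponents_of_succ (x : Fin n)
    (h : VertexSplittable {i : Fin n | (x : ℕ) + 1 ≤ i}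
      (monomialIdeal K (tripleExponents G ((x : ℕ) + 1)))) :
    VertexSplittable {i : Fin n | (x : ℕ) ≤ i} (monomialIdeal K (tripleExponents G x)) := by
  obtain ⟨L, hL, hLset, hpeo⟩ := exists_isPerfectEliminationOrdering_edgesMeeting hG x
  have hpairs := vertexSplittable_nonEdgeExponents (K := K) hL hpeo
  rw [hLset] at hpairs
  rw [tripleExponents_eq_union]
  refine .monomialIdeal_split (le_refl (x : ℕ)) ?_ ?_
    (hpairs.mono fun j hj => ?_) (h.mono fun j hj => ?_) ?_
  · rw [← tripleExponents_eq_union]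
    exact Finsupp.isAntichain_of_degree_eq fun _ => degree_of_mem_tripleExponents
  · rintro _ ⟨i₁, i₂, i₃, hx, h12, h23, -, rfl⟩
    have hx1 : x < i₁ := Fin.lt_def.mpr hx
    simp [Finsupp.single_eq_of_ne' hx1.ne', Finsupp.single_eq_of_ne' (hx1.trans h12).ne',
      Finsupp.single_eq_of_ne' (hx1.trans (h12.trans h23)).ne']
  · exact ⟨Nat.le_of_lt hj, Fin.ne_of_gt hj⟩
  · exact ⟨(Nat.le_succ _).trans hj, by rintro rfl; exact Nat.not_succ_le_self _ hj⟩
  · rintro _ ⟨i₁, i₂, i₃, hx, h12, h23, hc, rfl⟩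
    have hx1 : x < i₁ := Fin.lt_def.mpr hx
    have hx2 : x < i₂ := hx1.trans h12
    rcases hc with ⟨h1, -⟩ | h3
    · exact ⟨_, ⟨i₁, hx1, i₂, hx2, h12.ne, fun h => h1 h.1, rfl⟩, le_self_add⟩
    · refine ⟨_, ⟨i₂, hx2, i₃, hx2.trans h23, h23.ne, fun h => h3 h.1, rfl⟩, ?_⟩
      rw [add_assoc]
      exact le_add_self

theorem vertexSplittable_tripleExponents (m : ℕ) :
    VertexSplittable {i : Fin n | m ≤ (i : ℕ)} (monomialIdeal K (tripleExponents G m)) := by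
  by_cases hm : m < n
  · exact vertexSplittable_tripleExponents_of_succ hG ⟨m, hm⟩
      (vertexSplittable_tripleExponents (m + 1))
  · rw [tripleExponents_eq_empty (not_lt.mp hm), monomialIdeal_empty]
    exact .bot _
termination_by n - m

end Triples

/-- let `1, …, n` be a perfect elimination ordering of the (chordal) graph `G` and
let `L = HS_1(I(G^c))` be the ideal generated by all squarefree monomials `x_{i_1} x_{i_2} x_{i_3}`
with `i_1 < i_2 < i_3` such that either `{i_1,i_2} ∉ E(G)` and `{i_1,i_3} ∉ E(G)`, or
`{i_2,i_3} ∉ E(G)`. Then `L` is vertex splittable; in particular `L` has linear quotients. -/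
theorem stmt_17 {K : Type*} [Field K] {n : ℕ} (G : SimpleGraph (Fin n))
    (peo : ∀ i j k : Fin n, i < j → i < k → G.Adj i j → G.Adj i k → j ≠ k → G.Adj j k) :
    VertexSplittable Set.univ
      (Ideal.span {p : MvPolynomial (Fin n) K | ∃ i₁ i₂ i₃ : Fin n, i₁ < i₂ ∧ i₂ < i₃ ∧
        ((¬ G.Adj i₁ i₂ ∧ ¬ G.Adj i₁ i₃) ∨ ¬ G.Adj i₂ i₃) ∧
        p = monomial (Finsupp.single i₁ 1 + Finsupp.single i₂ 1 + Finsupp.single i₃ 1) 1}) ∧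
    HasLinearQuotients
      (Ideal.span {p : MvPolynomial (Fin n) K | ∃ i₁ i₂ i₃ : Fin n, i₁ < i₂ ∧ i₂ < i₃ ∧
        ((¬ G.Adj i₁ i₂ ∧ ¬ G.Adj i₁ i₃) ∨ ¬ G.Adj i₂ i₃) ∧
        p = monomial (Finsupp.single i₁ 1 + Finsupp.single i₂ 1 + Finsupp.single i₃ 1) 1}) := by
  have hL : Ideal.span {p : MvPolynomial (Fin n) K | ∃ i₁ i₂ i₃ : Fin n, i₁ < i₂ ∧ i₂ < i₃ ∧
      ((¬ G.Adj i₁ i₂ ∧ ¬ G.Adj i₁ i₃) ∨ ¬ G.Adj i₂ i₃) ∧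
      p = monomial (Finsupp.single i₁ 1 + Finsupp.single i₂ 1 + Finsupp.single i₃ 1) 1} =
      monomialIdeal K (tripleExponents G 0) := by
    simp only [monomialIdeal, tripleExponents, zero_le, true_and]
    congr 1
    ext p
    simp [eq_comm, and_assoc]
  have hsplit := (vertexSplittable_tripleExponents (K := K) peo 0).mono (Set.subset_univ _)
  rw [hL]
  exact ⟨hsplit, hsplit.hasLinearQuotients⟩
end
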